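/- arXiv:math/0001018 — 4 statements merged into one kernel-verified Lean document; each statement's English description precedes it below -/
import Mathlib

section
/- Let p ≥ 1, T > 0, and let x : [0,T] → ℝ^d be right-continuous with left limits (càdlàg) and of finite p-variation. Let (t_n)_{n≥1} be an injective sequence in (0,T] containing every discontinuity point of x, write j(t_n) = x(t_n) − x(t_n⁻) for the jump at t_n, and assume Σ_{n≥1} ‖j(t_n)‖^p < ∞. Fix δ > 0 and define τ^δ : [0,T] → [0, T + δ Σ_n ‖j(t_n)‖^p] by τ^δ(t) = t + δ Σ_{n≥1} ‖j(t_n)‖^p · 1_{{t_n ≤ t}}. Let x^δ : [0, τ^δ(T)] → ℝ^d be the continuous path determined by: x^δ(τ^δ(t)) = x(t) for all t ∈ [0,T], and for each n and s ∈ [τ^δ(t_n) − δ‖j(t_n)‖^p, τ^δ(t_n)), x^δ(s) = x(t_n⁻) + (s − (τ^δ(t_n) − δ‖j(t_n)‖^p)) · j(t_n) · δ^{−1} ‖j(t_n)‖^{−p} (i.e. x^δ traverses each jump linearly during the inserted fictitious time). Then the p-variation of x^δ over [0, τ^δ(T)] equals the p-variation of x over [0,T]: ‖x^δ‖_{p,[0,τ^δ(T)]}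 = ‖x‖_{p,[0,T]}. -/
open Filter

/-- The set of partition sums `Σ_k ‖f(t_k) − f(t_{k−1})‖^p` over all finite partitions
`a = t_0 ≤ t_1 ≤ … ≤ t_m = b` of `[a,b]`; its supremum is `‖f‖_{p,[a,b]}^p`, so that
`‖f‖_{p,[a,b]} = (sSup (pVarSums p a b f)) ^ (1/p)`. -/
def pVarSums {E : Type*} [NormedAddCommGroup E] (p a b : ℝ) (f : ℝ → E) : Set ℝ :=
  {S | ∃ (m : ℕ) (t : Fin (m + 1) → ℝ), Monotone t ∧ t 0 = a ∧ t (Fin.last m) = b ∧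
    S = ∑ i : Fin m, ‖f (t i.succ) - f (t i.castSucc)‖ ^ p}

/-!
Write `τ` for the clock `t ↦ t + ∑_{t_n ≤ t} w_n`, `w_n = δ ‖j(t_n)‖^p`, and `τ(t⁻)` for its left
limit. Every `s ∈ [0, τ T]` is `τ(t⁻) + θ (τ t - τ(t⁻))` for a tag `(t, θ)`, and then
`x^δ s = x(t⁻) + θ (x t - x(t⁻))`; this correspondence is monotone for the lexicographic order on
tags, so a partition sum of `x^δ` is a partition sum of `x` with its jumps filled in, over tags.

Partitions of `[0, T]` are carried by `τ` to partitions of `[0, τ T]` with the same sums.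
Conversely, a partition sum is convex in the parameter `θ` of a tag inside a jump segment, so
moving such tags, from left to right, to an end of their segment (or onto their right neighbour)
does not decrease it. The remaining tags have values `x t` and `x(t⁻) = lim_{η → 0+} x (t - η)`,
so the sum is a limit of partition sums of `x`.
-/

open Set Topology

section pVarSum

variable {E : Type*} [NormedAddCommGroup E] (p : ℝ)

noncomputable def pVarSum : List E → ℝ
  | a :: b :: l => ‖b - a‖ ^ p + pVarSum (b :: l)
  | _ => 0

@[simp] lemma pVarSum_cons_cons (a b : E) (l : List E) :
    pVarSum p (a :: b :: l) = ‖b - a‖ ^ p + pVarSum p (b :: l) := rfl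

@[simp] lemma pVarSum_singleton (a : E) : pVarSum p [a] = 0 := rfl

lemma pVarSum_nonneg : ∀ l : List E, 0 ≤ pVarSum p l
  | [] | [_] => le_rfl
  | _ :: b :: l => add_nonneg (by positivity) (pVarSum_nonneg (b :: l))

lemma pVarSum_le_cons (a : E) : ∀ l : List E, pVarSum p l ≤ pVarSum p (a :: l)
  | [] => le_rfl
  | _ :: _ => le_add_of_nonneg_left (by positivity)

lemma pVarSum_le_append_singleton (b : E) : ∀ l : List E, pVarSum p l ≤ pVarSum p (l ++ [b])
  | [] => le_rfl
  | [a] => pVarSum_nonneg p [a, b]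
  | a :: c :: l => by
    simpa only [List.cons_append, pVarSum_cons_cons] using
      add_le_add_right (pVarSum_le_append_singleton b (c :: l)) (‖c - a‖ ^ p)

lemma pVarSum_ofFn : ∀ {m : ℕ} (g : Fin (m + 1) → E),
    pVarSum p (List.ofFn g) = ∑ i : Fin m, ‖g i.succ - g i.castSucc‖ ^ p
  | 0, g => by simp
  | m + 1, g => by
    rw [List.ofFn_succ, List.ofFn_succ, pVarSum_cons_cons,
      ← List.ofFn_succ (f := fun i => g i.succ), pVarSum_ofFn,
      Fin.sum_univ_succ (f := fun i : Fin (m + 1) => ‖g i.succ - g i.castSucc‖ ^ p)]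
    rfl

lemma tendsto_pVarSum_map {α ι : Type*} {l : Filter ι} (hp : 0 ≤ p) {F : ι → α → E}
    {G : α → E} : ∀ {L : List α}, (∀ q ∈ L, Tendsto (fun η => F η q) l (𝓝 (G q))) →
      Tendsto (fun η => pVarSum p (L.map (F η))) l (𝓝 (pVarSum p (L.map G)))
  | [], _ | [_], _ => tendsto_const_nhds
  | a :: b :: L, h => by
    simp only [List.map_cons, pVarSum_cons_cons]
    refine (((h b (by simp)).sub (h a (by simp))).norm.rpow_const (Or.inr hp)).add ?_
    exact tendsto_pVarSum_map hp (L := b :: L) fun q hq => h q (List.mem_cons_of_mem a hq)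

end pVarSum

section pVarSums

variable {E : Type*} [NormedAddCommGroup E] {p a b : ℝ} {f : ℝ → E}

lemma pVarSums_nonempty (hab : a ≤ b) : (pVarSums p a b f).Nonempty :=
  ⟨_, 1, ![a, b], fun i j hij => by fin_cases i <;> fin_cases j <;> simp_all, rfl, rfl, rfl⟩

lemma exists_list_of_mem_pVarSums {S : ℝ} (hS : S ∈ pVarSums p a b f) :
    ∃ l : List ℝ, l.IsChain (· ≤ ·) ∧ (∀ s ∈ l, s ∈ Icc a b) ∧ S = pVarSum p (l.map f) := by
  obtain ⟨m, t, ht, ht0, htm, rfl⟩ := hS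
  refine ⟨List.ofFn t, List.isChain_ofFn.2 fun i _ => ht (Fin.mk_le_mk.2 i.le_succ), ?_, ?_⟩
  · simp only [List.mem_ofFn, forall_exists_index]
    rintro _ i rfl
    exact ⟨ht0 ▸ ht (Fin.zero_le i), htm ▸ ht (Fin.le_last i)⟩
  · rw [List.map_ofFn, pVarSum_ofFn]
    rfl

lemma pVarSum_mem_pVarSums {l : List ℝ} (hl : (a :: l).IsChain (· ≤ ·))
    (hlast : (a :: l).getLast (List.cons_ne_nil a l) = b) :
    pVarSum p ((a :: l).map f) ∈ pVarSums p a b f := by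
  refine ⟨l.length, fun i => (a :: l)[i], fun i j hij => ?_, rfl, ?_, ?_⟩
  · exact (List.isChain_iff_pairwise.1 hl).rel_get_of_le hij
  · rw [← hlast, List.getLast_eq_getElem]
    rfl
  · conv_lhs => rw [← List.ofFn_getElem (xs := a :: l)]
    rw [List.map_ofFn, pVarSum_ofFn]
    rfl

lemma pVarSum_le_sSup_pVarSums (hab : a ≤ b) (hf : BddAbove (pVarSums p a b f)) {l : List ℝ}
    (hl : l.IsChain (· ≤ ·)) (hmem : ∀ s ∈ l, s ∈ Icc a b) :
    pVarSum p (l.map f) ≤ sSup (pVarSums p a b f) := by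
  have hchain : (a :: (l ++ [b])).IsChain (· ≤ ·) := by
    simp only [List.isChain_iff_pairwise, List.pairwise_cons, List.pairwise_append,
      List.mem_append, List.mem_singleton] at hl ⊢
    refine ⟨?_, hl, by simp, fun s hs _ hb => hb ▸ (hmem s hs).2⟩
    rintro s (hs | rfl)
    exacts [(hmem s hs).1, hab]
  calc pVarSum p (l.map f) ≤ pVarSum p (f a :: (l.map f ++ [f b])) :=
        (pVarSum_le_append_singleton p _ _).trans (pVarSum_le_cons p _ _)
    _ ≤ sSup (pVarSums p a b f) := le_csSup hf (by
        simpa using pVarSum_mem_pVarSums (f := f) (p := p) hchain (by simp))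

lemma pVarSums_subset_of_monotoneOn {g : ℝ → E} {a' b' : ℝ} {φ : ℝ → ℝ}
    (hφ : MonotoneOn φ (Icc a b)) (ha : φ a = a') (hb : φ b = b')
    (hfg : ∀ t ∈ Icc a b, g (φ t) = f t) : pVarSums p a b f ⊆ pVarSums p a' b' g := by
  rintro _ ⟨m, t, ht, ht0, htm, rfl⟩
  have hmem : ∀ i, t i ∈ Icc a b := fun i => ⟨ht0 ▸ ht (Fin.zero_le i), htm ▸ ht (Fin.le_last i)⟩
  refine ⟨m, φ ∘ t, fun i j hij => hφ (hmem i) (hmem j) (ht hij), by simp [ht0, ha],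
    by simp [htm, hb], ?_⟩
  simp only [Function.comp_apply, hfg _ (hmem _)]

end pVarSums

section fill

variable {E : Type*} [NormedAddCommGroup E] [NormedSpace ℝ E] {p : ℝ}

lemma convexOn_univ_norm_rpow (hp : 1 ≤ p) : ConvexOn ℝ univ fun z : E => ‖z‖ ^ p := by
  refine ⟨convex_univ, fun x _ y _ a b ha hb hab => ?_⟩
  calc ‖a • x + b • y‖ ^ p ≤ (a * ‖x‖ + b * ‖y‖) ^ p :=
        Real.rpow_le_rpow (norm_nonneg _) (convexOn_univ_norm.2 trivial trivial ha hb hab)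
          (by linarith)
    _ ≤ a * ‖x‖ ^ p + b * ‖y‖ ^ p :=
        (convexOn_rpow hp).2 (norm_nonneg x) (norm_nonneg y) ha hb hab

lemma convexOn_norm_add_smul_rpow (hp : 1 ≤ p) (c u : E) :
    ConvexOn ℝ univ fun θ : ℝ => ‖c + θ • u‖ ^ p := by
  refine ((convexOn_univ_norm_rpow hp).comp_affineMap (AffineMap.lineMap c (c + u))).congr ?_
  intro θ _
  simp [AffineMap.lineMap_apply, add_comm]

def fillPath (x xm : ℝ → E) (q : ℝ ×ₗ ℝ) : E :=
  xm (ofLex q).1 + (ofLex q).2 • (x (ofLex q).1 - xm (ofLex q).1)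

lemma convexOn_norm_fillPath_sub_rpow (hp : 1 ≤ p) (x xm : ℝ → E) (t : ℝ) (y : E) :
    ConvexOn ℝ univ fun θ => ‖fillPath x xm (toLex (t, θ)) - y‖ ^ p :=
  (convexOn_norm_add_smul_rpow hp (xm t - y) (x t - xm t)).congr fun θ _ => by
    simp only [fillPath, ofLex_toLex]
    congr 2
    abel

lemma convexOn_norm_sub_fillPath_rpow (hp : 1 ≤ p) (x xm : ℝ → E) (t : ℝ) (y : E) :
    ConvexOn ℝ univ fun θ => ‖y - fillPath x xm (toLex (t, θ))‖ ^ p :=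
  (convexOn_norm_fillPath_sub_rpow hp x xm t y).congr fun θ _ => by
    simp only [norm_sub_rev]

/-- Tags `(t, θ)` parametrize `x` with its jumps filled in: `(t, 1)` stands for `x t` and `(t, θ)`
for the point at parameter `θ` on the segment from the left limit `xm t` to `x t`, which is only
meaningful for `t > 0`; the lexicographic order is the order of traversal. -/
def fillDomain (T : ℝ) : Set (ℝ ×ₗ ℝ) :=
  {q | (ofLex q).1 ∈ Icc 0 T ∧ (ofLex q).2 ∈ Icc 0 1 ∧ ((ofLex q).2 = 1 ∨ 0 < (ofLex q).1)}

def fillEndpoints (T : ℝ) : Set (ℝ ×ₗ ℝ) :=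
  {q ∈ fillDomain T | (ofLex q).2 = 0 ∨ (ofLex q).2 = 1}

lemma toLex_le_toLex_of_le_right {t θ θ' : ℝ} (h : θ ≤ θ') : toLex (t, θ) ≤ toLex (t, θ') :=
  Prod.Lex.toLex_le_toLex.2 (Or.inr ⟨rfl, h⟩)

lemma toLex_zero_one_le {T : ℝ} {q : ℝ ×ₗ ℝ} (hq : q ∈ fillDomain T) : toLex (0, 1) ≤ q := by
  obtain ⟨⟨h0, -⟩, -, h⟩ := hq
  rcases h with h | h
  · rcases h0.lt_or_eq with h0 | h0
    · exact Prod.Lex.le_iff.2 (Or.inl h0)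
    · exact Prod.Lex.le_iff.2 (Or.inr ⟨h0, h.ge⟩)
  · exact Prod.Lex.le_iff.2 (Or.inl h)

lemma le_toLex_zero_of_le {T t θ : ℝ} {v : ℝ ×ₗ ℝ} (hv : v ∈ fillEndpoints T)
    (hvq : v ≤ toLex (t, θ)) (hθ : θ < 1) : v ≤ toLex (t, 0) := by
  rcases Prod.Lex.le_iff.1 hvq with h | ⟨h, hle⟩
  · exact Prod.Lex.le_iff.2 (Or.inl h)
  · refine Prod.Lex.le_iff.2 (Or.inr ⟨h, ?_⟩)
    rcases hv.2 with h0 | h1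
    · exact h0.le
    · simp only [ofLex_toLex] at hle
      linarith

end fill

section push

variable {E : Type*} [NormedAddCommGroup E] [NormedSpace ℝ E] {p T t θ : ℝ}

lemma toLex_zero_mem_fillEndpoints (ht : t ∈ Ioc 0 T) : toLex (t, 0) ∈ fillEndpoints T :=
  ⟨⟨Ioc_subset_Icc_self ht, by simp, Or.inr ht.1⟩, Or.inl rfl⟩

lemma toLex_one_mem_fillEndpoints (ht : t ∈ Icc 0 T) : toLex (t, 1) ∈ fillEndpoints T :=
  ⟨⟨ht, by simp, Or.inl rfl⟩, Or.inr rfl⟩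

lemma mem_Ioc_and_mem_Ioo_of_mem_diff (hq : toLex (t, θ) ∈ fillDomain T \ fillEndpoints T) :
    t ∈ Ioc 0 T ∧ θ ∈ Ioo 0 1 := by
  obtain ⟨⟨ht, hθ, hpos⟩, hq'⟩ := hq
  simp only [fillEndpoints, fillDomain, ofLex_toLex, mem_ofPred_eq, not_and, not_or]
    at ht hθ hpos hq'
  obtain ⟨hθ0, hθ1⟩ := hq' ⟨ht, hθ, hpos⟩
  exact ⟨⟨hpos.resolve_left hθ1, ht.2⟩, hθ.1.lt_of_ne' hθ0, hθ.2.lt_of_ne hθ1⟩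

lemma exists_push_to_end_of_last (hp : 1 ≤ p) (x xm : ℝ → E) {v : ℝ ×ₗ ℝ}
    (hv : v ∈ fillEndpoints T) (ht : t ∈ Ioc 0 T) (hθ : θ ∈ Ioo 0 1) (hvq : v ≤ toLex (t, θ)) :
    ∃ q' ∈ fillEndpoints T, v ≤ q' ∧
      ‖fillPath x xm (toLex (t, θ)) - fillPath x xm v‖ ^ p ≤
        ‖fillPath x xm q' - fillPath x xm v‖ ^ p := by
  have hg := convexOn_norm_fillPath_sub_rpow hp x xm t (fillPath x xm v)
  rcases le_max_iff.1 (hg.le_max_of_mem_Icc trivial trivial (Ioo_subset_Icc_self hθ))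
    with hle | hle
  · exact ⟨_, toLex_zero_mem_fillEndpoints ht, le_toLex_zero_of_le hv hvq hθ.2, hle⟩
  · exact ⟨_, toLex_one_mem_fillEndpoints (Ioc_subset_Icc_self ht),
      hvq.trans (toLex_le_toLex_of_le_right hθ.2.le), hle⟩

lemma exists_push_to_end (hp : 1 ≤ p) (x xm : ℝ → E) {v h : ℝ ×ₗ ℝ} (hv : v ∈ fillEndpoints T)
    (ht : t ∈ Ioc 0 T) (hθ : θ ∈ Ioo 0 1) (hvq : v ≤ toLex (t, θ)) (hqh : toLex (t, θ) ≤ h) :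
    ∃ q', v ≤ q' ∧ q' ≤ h ∧ (q' ∈ fillEndpoints T ∨ q' = h) ∧
      ‖fillPath x xm (toLex (t, θ)) - fillPath x xm v‖ ^ p +
          ‖fillPath x xm h - fillPath x xm (toLex (t, θ))‖ ^ p ≤
        ‖fillPath x xm q' - fillPath x xm v‖ ^ p + ‖fillPath x xm h - fillPath x xm q'‖ ^ p := by
  have hg := (convexOn_norm_fillPath_sub_rpow hp x xm t (fillPath x xm v)).add
    (convexOn_norm_sub_fillPath_rpow hp x xm t (fillPath x xm h))
  have hv0 : v ≤ toLex (t, 0) := le_toLex_zero_of_le hv hvq hθ.2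
  have h0h : toLex (t, 0) ≤ h := (toLex_le_toLex_of_le_right hθ.1.le).trans hqh
  by_cases hht : (ofLex h).1 = t
  · have hθh : θ ≤ (ofLex h).2 := by
      rcases Prod.Lex.le_iff.1 hqh with hlt | ⟨-, hle⟩
      · exact absurd hlt (by simp [hht])
      · exact hle
    have hh_eq : toLex (t, (ofLex h).2) = h := by rw [← hht]; rfl
    rcases le_max_iff.1 (hg.le_max_of_mem_Icc trivial trivial ⟨hθ.1.le, hθh⟩) with hle | hle
    · exact ⟨_, hv0, h0h, Or.inl (toLex_zero_mem_fillEndpoints ht), hle⟩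
    · exact ⟨h, hvq.trans hqh, le_rfl, Or.inr rfl, by simpa only [Pi.add_apply, hh_eq] using hle⟩
  · have h1h : toLex (t, 1) ≤ h := by
      rcases Prod.Lex.le_iff.1 hqh with hlt | ⟨heq, -⟩
      · exact Prod.Lex.le_iff.2 (Or.inl hlt)
      · exact absurd heq.symm hht
    rcases le_max_iff.1 (hg.le_max_of_mem_Icc trivial trivial (Ioo_subset_Icc_self hθ))
      with hle | hle
    · exact ⟨_, hv0, h0h, Or.inl (toLex_zero_mem_fillEndpoints ht), hle⟩
    · exact ⟨_, hvq.trans (toLex_le_toLex_of_le_right hθ.2.le), h1h,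
        Or.inl (toLex_one_mem_fillEndpoints (Ioc_subset_Icc_self ht)), hle⟩

theorem exists_fillEndpoints_pVarSum_le (hp : 1 ≤ p) (x xm : ℝ → E) (T : ℝ) :
    ∀ (L : List (ℝ ×ₗ ℝ)) {v : ℝ ×ₗ ℝ}, v ∈ fillEndpoints T → (v :: L).IsChain (· ≤ ·) →
      (∀ q ∈ L, q ∈ fillDomain T) → ∃ L' : List (ℝ ×ₗ ℝ), (v :: L').IsChain (· ≤ ·) ∧
        (∀ q ∈ L', q ∈ fillEndpoints T) ∧
        pVarSum p ((v :: L).map (fillPath x xm)) ≤ pVarSum p ((v :: L').map (fillPath x xm))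
  | [], _, _, _, _ => ⟨[], by simp, by simp, le_rfl⟩
  | q :: M, v, hv, hchain, hL => by
    obtain ⟨hvq, hqM⟩ := List.isChain_cons_cons.1 hchain
    have hM : ∀ r ∈ M, r ∈ fillDomain T := fun r hr => hL r (List.mem_cons_of_mem q hr)
    by_cases hq : q ∈ fillEndpoints T
    · obtain ⟨M', hchain', hM', hle⟩ := exists_fillEndpoints_pVarSum_le hp x xm T M hq hqM hM
      refine ⟨q :: M', List.isChain_cons_cons.2 ⟨hvq, hchain'⟩, ?_, ?_⟩
      · simpa [hq] using hM'
      · simp only [List.map_cons, pVarSum_cons_cons] at hle ⊢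
        linarith
    obtain ⟨⟨t, θ⟩, rfl⟩ := toLex.surjective q
    obtain ⟨ht, hθ⟩ := mem_Ioc_and_mem_Ioo_of_mem_diff ⟨hL _ List.mem_cons_self, hq⟩
    cases M with
    | nil =>
      obtain ⟨q', hq'E, hvq', hle⟩ := exists_push_to_end_of_last hp x xm hv ht hθ hvq
      exact ⟨[q'], List.isChain_pair.2 hvq', by simpa using hq'E, by simpa using hle⟩
    | cons h M =>
      obtain ⟨hqh, hhM⟩ := List.isChain_cons_cons.1 hqM
      obtain ⟨q', hvq', hq'h, hq' | rfl, hle⟩ := exists_push_to_end hp x xm hv ht hθ hvq hqh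
      · obtain ⟨M', hchain', hM', hle'⟩ := exists_fillEndpoints_pVarSum_le hp x xm T (h :: M) hq'
          (List.isChain_cons_cons.2 ⟨hq'h, hhM⟩) hM
        refine ⟨q' :: M', List.isChain_cons_cons.2 ⟨hvq', hchain'⟩, ?_, ?_⟩
        · simpa [hq'] using hM'
        · simp only [List.map_cons, pVarSum_cons_cons] at hle hle' ⊢
          linarith
      · obtain ⟨M', hchain', hM', hle'⟩ := exists_fillEndpoints_pVarSum_le hp x xm T (q' :: M) hv
          (List.isChain_cons_cons.2 ⟨hvq', hhM⟩) hM
        refine ⟨M', hchain', hM', ?_⟩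
        simp only [List.map_cons, pVarSum_cons_cons, sub_self, norm_zero] at hle hle' ⊢
        rw [Real.zero_rpow (by linarith)] at hle
        linarith

end push

section approx

variable {E : Type*} [NormedAddCommGroup E] [NormedSpace ℝ E] {p T : ℝ} {x xm : ℝ → E}

/-- For small `η > 0`, `x` at this time approximates the filled path at an endpoint tag `q`. -/
def approxTime (η : ℝ) (q : ℝ ×ₗ ℝ) : ℝ := (ofLex q).1 - η * (1 - (ofLex q).2)

lemma tendsto_approxTime (hleft : ∀ t ∈ Ioc 0 T, Tendsto x (𝓝[<] t) (𝓝 (xm t)))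
    {q : ℝ ×ₗ ℝ} (hq : q ∈ fillEndpoints T) :
    Tendsto (fun η => x (approxTime η q)) (𝓝[>] 0) (𝓝 (fillPath x xm q)) := by
  obtain ⟨⟨t, θ⟩, rfl⟩ := toLex.surjective q
  obtain ⟨⟨ht, -, hpos⟩, rfl | rfl⟩ := hq <;>
    simp only [approxTime, fillPath, ofLex_toLex] at ht hpos ⊢
  · have ht0 : 0 < t := hpos.resolve_left zero_ne_one
    have hshift : Tendsto (fun η : ℝ => t - η) (𝓝[>] 0) (𝓝[<] t) := by
      refine tendsto_nhdsWithin_iff.2 ⟨?_, eventually_nhdsWithin_of_forall fun η hη => ?_⟩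
      · simpa using ((continuous_sub_left t).tendsto 0).mono_left nhdsWithin_le_nhds
      · simpa using hη
    simpa [Function.comp_def] using (hleft t ⟨ht0, ht.2⟩).comp hshift
  · simp

lemma eventually_approxTime_mem_Icc {q : ℝ ×ₗ ℝ} (hq : q ∈ fillEndpoints T) :
    ∀ᶠ η in 𝓝[>] 0, approxTime η q ∈ Icc 0 T := by
  obtain ⟨⟨t, θ⟩, rfl⟩ := toLex.surjective q
  obtain ⟨⟨ht, -, hpos⟩, rfl | rfl⟩ := hq <;>
    simp only [approxTime, ofLex_toLex] at ht hpos ⊢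
  · filter_upwards [Ioo_mem_nhdsGT (hpos.resolve_left zero_ne_one)] with η hη
    constructor <;> linarith [hη.1, hη.2, ht.2]
  · simpa using ht

lemma eventually_approxTime_le_approxTime {q q' : ℝ ×ₗ ℝ} (hq : q ∈ fillDomain T)
    (hq' : q' ∈ fillDomain T) (hqq' : q ≤ q') :
    ∀ᶠ η in 𝓝[>] 0, approxTime η q ≤ approxTime η q' := by
  simp only [approxTime]
  rcases Prod.Lex.le_iff.1 hqq' with hlt | ⟨heq, hle⟩
  · filter_upwards [Ioo_mem_nhdsGT (sub_pos.2 hlt)] with η hη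
    nlinarith [hη.1, hη.2, hq.2.1.1, hq.2.1.2, hq'.2.1.1, hq'.2.1.2]
  · filter_upwards [self_mem_nhdsWithin] with η (hη : 0 < η)
    rw [heq]
    nlinarith

theorem exists_pVarSum_fillPath_lt (hp : 1 ≤ p)
    (hleft : ∀ t ∈ Ioc 0 T, Tendsto x (𝓝[<] t) (𝓝 (xm t))) {L : List (ℝ ×ₗ ℝ)}
    (hL : L.IsChain (· ≤ ·)) (hLE : ∀ q ∈ L, q ∈ fillEndpoints T) {ε : ℝ} (hε : 0 < ε) :
    ∃ u : List ℝ, u.IsChain (· ≤ ·) ∧ (∀ s ∈ u, s ∈ Icc 0 T) ∧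
      pVarSum p (L.map (fillPath x xm)) < pVarSum p (u.map x) + ε := by
  have hlim : Tendsto (fun η => pVarSum p (L.map fun q => x (approxTime η q))) (𝓝[>] 0)
      (𝓝 (pVarSum p (L.map (fillPath x xm)))) :=
    tendsto_pVarSum_map p (by linarith) fun q hq => tendsto_approxTime hleft (hLE q hq)
  have hclose := hlim.eventually (lt_mem_nhds (sub_lt_self _ hε))
  have hmem : ∀ᶠ η in 𝓝[>] 0, ∀ q ∈ L, approxTime η q ∈ Icc 0 T :=
    (eventually_all_finite L.finite_toSet).2 fun q hq => eventually_approxTime_mem_Icc (hLE q hq)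
  have hmono : ∀ᶠ η in 𝓝[>] 0, ∀ q ∈ L, ∀ q' ∈ L, q ≤ q' → approxTime η q ≤ approxTime η q' :=
    (eventually_all_finite L.finite_toSet).2 fun q hq =>
      (eventually_all_finite L.finite_toSet).2 fun q' hq' => by
        simpa only [eventually_imp_distrib_left] using fun hqq' =>
          eventually_approxTime_le_approxTime (hLE q hq).1 (hLE q' hq').1 hqq'
  obtain ⟨η, hclose, hmem, hmono⟩ := (hclose.and (hmem.and hmono)).exists
  refine ⟨L.map (approxTime η), ?_, fun s hs => ?_, ?_⟩
  · exact List.isChain_iff_pairwise.2 (List.pairwise_map.2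
      ((List.isChain_iff_pairwise.1 hL).imp_of_mem fun ha hb hab => hmono _ ha _ hb hab))
  · obtain ⟨q, hq, rfl⟩ := List.mem_map.1 hs
    exact hmem q hq
  · rw [List.map_map, Function.comp_def]
    linarith

theorem pVarSum_fillPath_le_sSup_pVarSums (hp : 1 ≤ p) (hT : 0 ≤ T)
    (hleft : ∀ t ∈ Ioc 0 T, Tendsto x (𝓝[<] t) (𝓝 (xm t)))
    (hfin : BddAbove (pVarSums p 0 T x)) {L : List (ℝ ×ₗ ℝ)} (hL : L.IsChain (· ≤ ·))
    (hLD : ∀ q ∈ L, q ∈ fillDomain T) :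
    pVarSum p (L.map (fillPath x xm)) ≤ sSup (pVarSums p 0 T x) := by
  have hv : toLex (0, 1) ∈ fillEndpoints T := toLex_one_mem_fillEndpoints ⟨le_rfl, hT⟩
  have hchain : (toLex (0, 1) :: L).IsChain (· ≤ ·) := by
    cases L with
    | nil => simp
    | cons q L => exact List.isChain_cons_cons.2 ⟨toLex_zero_one_le (hLD q (by simp)), hL⟩
  obtain ⟨L', hchain', hL', hle⟩ := exists_fillEndpoints_pVarSum_le hp x xm T L hv hchain hLD
  refine le_of_forall_pos_le_add fun ε hε => ?_
  obtain ⟨u, hu, huT, hlt⟩ :=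
    exists_pVarSum_fillPath_lt hp hleft hchain' (by simpa [hv] using hL') hε
  calc pVarSum p (L.map (fillPath x xm)) ≤ pVarSum p ((toLex (0, 1) :: L).map (fillPath x xm)) :=
        pVarSum_le_cons p _ _
    _ ≤ pVarSum p (u.map x) + ε := hle.trans hlt.le
    _ ≤ sSup (pVarSums p 0 T x) + ε := by
        gcongr
        exact pVarSum_le_sSup_pVarSums hT hfin hu huT

end approx

theorem le_sSup_pVarSums_of_fillPath {E : Type*} [NormedAddCommGroup E] [NormedSpace ℝ E]
    {p T a b : ℝ} {x xm y : ℝ → E} (hp : 1 ≤ p) (hT : 0 ≤ T)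
    (hleft : ∀ t ∈ Ioc 0 T, Tendsto x (𝓝[<] t) (𝓝 (xm t)))
    (hfin : BddAbove (pVarSums p 0 T x)) {Φ : ℝ ×ₗ ℝ → ℝ} (hΦ : MonotoneOn Φ (fillDomain T))
    (htag : ∀ s ∈ Icc a b, ∃ q ∈ fillDomain T, Φ q = s ∧ fillPath x xm q = y s) {S : ℝ}
    (hS : S ∈ pVarSums p a b y) : S ≤ sSup (pVarSums p 0 T x) := by
  choose! tag htagD htagΦ htagX using htag
  have hmono : MonotoneOn tag (Icc a b) :=
    Function.monotoneOn_of_rightInvOn_of_mapsTo hΦ htagΦ htagD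
  obtain ⟨l, hl, hlI, rfl⟩ := exists_list_of_mem_pVarSums hS
  have hchain : (l.map tag).IsChain (· ≤ ·) :=
    List.isChain_iff_pairwise.2 (List.pairwise_map.2 ((List.isChain_iff_pairwise.1 hl).imp_of_mem
      fun ha hb hab => hmono (hlI _ ha) (hlI _ hb) hab))
  calc pVarSum p (l.map y) = pVarSum p ((l.map tag).map (fillPath x xm)) := by
        rw [List.map_map, List.map_congr_left fun s hs => (htagX s (hlI s hs)).symm]
        rfl
    _ ≤ sSup (pVarSums p 0 T x) :=
        pVarSum_fillPath_le_sSup_pVarSums hp hT hleft hfin hchain fun q hq => by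
          obtain ⟨s, hs, rfl⟩ := List.mem_map.1 hq
          exact htagD s (hlI s hs)

noncomputable def clock (tseq w : ℕ → ℝ) (t : ℝ) : ℝ := t + ∑' n, if tseq n ≤ t then w n else 0

noncomputable def leftClock (tseq w : ℕ → ℝ) (t : ℝ) : ℝ :=
  t + ∑' n, if tseq n < t then w n else 0

noncomputable def fillTime (tseq w : ℕ → ℝ) (q : ℝ ×ₗ ℝ) : ℝ :=
  leftClock tseq w (ofLex q).1 +
    (ofLex q).2 * (clock tseq w (ofLex q).1 - leftClock tseq w (ofLex q).1)

section clock

variable {tseq w : ℕ → ℝ}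

lemma summable_ite_of_nonneg (hw : ∀ n, 0 ≤ w n) (hws : Summable w) (P : ℕ → Prop)
    [DecidablePred P] :
    Summable fun n => if P n then w n else 0 :=
  hws.of_nonneg_of_le (fun n => by split_ifs <;> simp [hw n])
    (fun n => by split_ifs <;> simp [hw n])

lemma tsum_ite_le_tsum_ite (hw : ∀ n, 0 ≤ w n) (hws : Summable w) {P Q : ℕ → Prop}
    [DecidablePred P] [DecidablePred Q] (hPQ : ∀ n, P n → Q n) :
    ∑' n, (if P n then w n else 0) ≤ ∑' n, if Q n then w n else 0 :=
  (summable_ite_of_nonneg hw hws P).tsum_le_tsum (fun n => by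
    split_ifs with hP hQ hQ
    exacts [le_rfl, absurd (hPQ n hP) hQ, hw n, le_rfl]) (summable_ite_of_nonneg hw hws Q)

lemma leftClock_le_clock (hw : ∀ n, 0 ≤ w n) (hws : Summable w) (t : ℝ) :
    leftClock tseq w t ≤ clock tseq w t :=
  add_le_add le_rfl (tsum_ite_le_tsum_ite hw hws fun _ => le_of_lt)

lemma clock_lt_leftClock (hw : ∀ n, 0 ≤ w n) (hws : Summable w) {t t' : ℝ} (h : t < t') :
    clock tseq w t < leftClock tseq w t' :=
  add_lt_add_of_lt_of_le h (tsum_ite_le_tsum_ite hw hws fun _ hn => hn.trans_lt h)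

lemma clock_strictMono (hw : ∀ n, 0 ≤ w n) (hws : Summable w) : StrictMono (clock tseq w) :=
  fun _ _ h => (clock_lt_leftClock hw hws h).trans_le (leftClock_le_clock hw hws _)

lemma clock_eq_self {t : ℝ} (h : ∀ n, t < tseq n) : clock tseq w t = t := by
  simp [clock, fun n => not_le.2 (h n)]

lemma leftClock_eq_clock {t : ℝ} (h : ∀ n, tseq n ≠ t) :
    leftClock tseq w t = clock tseq w t := by
  simp only [leftClock, clock, fun n => (h n).le_iff_lt]

lemma clock_sub_leftClock (hw : ∀ n, 0 ≤ w n) (hws : Summable w)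
    (hinj : Function.Injective tseq) (n : ℕ) :
    clock tseq w (tseq n) - leftClock tseq w (tseq n) = w n := by
  rw [clock, leftClock, add_sub_add_left_eq_sub,
    ← (summable_ite_of_nonneg hw hws _).tsum_sub (summable_ite_of_nonneg hw hws _),
    ← tsum_ite_eq n w]
  refine tsum_congr fun m => ?_
  rcases lt_trichotomy (tseq m) (tseq n) with h | h | h
  · have hmn : m ≠ n := fun hmn => h.ne (congrArg tseq hmn)
    simp [h, h.le, hmn]
  · simp [hinj h]
  · have hmn : m ≠ n := fun hmn => h.ne' (congrArg tseq hmn)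
    simp [not_le.2 h, not_lt.2 h.le, hmn]

lemma tendsto_tsum_ite_of_eventually_iff (hw : ∀ n, 0 ≤ w n) (hws : Summable w) {l : Filter ℝ}
    {P : ℝ → ℕ → Prop} [∀ t, DecidablePred (P t)] {Q : ℕ → Prop} [DecidablePred Q]
    (hPQ : ∀ n, ∀ᶠ t in l, P t n ↔ Q n) :
    Tendsto (fun t => ∑' n, if P t n then w n else 0) l (𝓝 (∑' n, if Q n then w n else 0)) :=
  tendsto_tsum_of_dominated_convergence hws
    (fun n => tendsto_const_nhds.congr' ((hPQ n).mono fun t ht => by simp only [ht]))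
    (Eventually.of_forall fun t n => by split_ifs <;> simp [abs_of_nonneg (hw n), hw n])

lemma tendsto_clock_nhdsGT (hw : ∀ n, 0 ≤ w n) (hws : Summable w) (t₀ : ℝ) :
    Tendsto (clock tseq w) (𝓝[>] t₀) (𝓝 (clock tseq w t₀)) := by
  refine (tendsto_nhdsWithin_of_tendsto_nhds tendsto_id).add
    (tendsto_tsum_ite_of_eventually_iff hw hws fun n => ?_)
  by_cases h : tseq n ≤ t₀
  · filter_upwards [self_mem_nhdsWithin] with t (ht : t₀ < t)
    simp [h, h.trans ht.le]
  · filter_upwards [Ioo_mem_nhdsGT (not_le.1 h)] with t ht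
    simp [h, not_le.2 ht.2]

lemma tendsto_clock_nhdsLT (hw : ∀ n, 0 ≤ w n) (hws : Summable w) (t₀ : ℝ) :
    Tendsto (clock tseq w) (𝓝[<] t₀) (𝓝 (leftClock tseq w t₀)) := by
  refine (tendsto_nhdsWithin_of_tendsto_nhds tendsto_id).add
    (tendsto_tsum_ite_of_eventually_iff hw hws fun n => ?_)
  by_cases h : tseq n < t₀
  · filter_upwards [Ioo_mem_nhdsLT h] with t ht
    simp [h, ht.1.le]
  · filter_upwards [self_mem_nhdsWithin] with t (ht : t < t₀)
    have hn : ¬tseq n ≤ t := fun h' => h (h'.trans_lt ht)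
    simp [h, hn]

lemma exists_mem_Icc_leftClock_clock (hw : ∀ n, 0 ≤ w n) (hws : Summable w) {a T s : ℝ}
    (hs : s ∈ Icc (clock tseq w a) (clock tseq w T)) :
    ∃ c ∈ Icc a T, leftClock tseq w c ≤ s ∧ s ≤ clock tseq w c := by
  set A := {t ∈ Icc a T | s ≤ clock tseq w t}
  have hTA : T ∈ A :=
    ⟨⟨(clock_strictMono hw hws).le_iff_le.1 (hs.1.trans hs.2), le_rfl⟩, hs.2⟩
  have hbdd : BddBelow A := ⟨a, fun t ht => ht.1.1⟩
  have hac : a ≤ sInf A := le_csInf ⟨T, hTA⟩ fun t ht => ht.1.1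
  refine ⟨sInf A, ⟨hac, csInf_le hbdd hTA⟩, ?_, ?_⟩
  · rcases hac.eq_or_lt with hac | hac
    · exact hac ▸ (leftClock_le_clock hw hws a).trans hs.1
    refine le_of_tendsto (tendsto_clock_nhdsLT hw hws _) ?_
    filter_upwards [Ioo_mem_nhdsLT hac] with t ht
    by_contra! hst
    exact notMem_of_lt_csInf ht.2 hbdd
      ⟨⟨ht.1.le, ht.2.le.trans (csInf_le hbdd hTA)⟩, hst.le⟩
  · have hcont : ContinuousWithinAt (clock tseq w) A (sInf A) :=
      (continuousWithinAt_Ioi_iff_Ici.1 (tendsto_clock_nhdsGT hw hws _)).mono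
        fun t ht => csInf_le hbdd ht
    refine closure_minimal ?_ isClosed_Ici
      (hcont.mem_closure_image (csInf_mem_closure ⟨T, hTA⟩ hbdd))
    rintro _ ⟨t, ht, rfl⟩
    exact ht.2

lemma monotoneOn_fillTime (hw : ∀ n, 0 ≤ w n) (hws : Summable w) :
    MonotoneOn (fillTime tseq w) {q | (ofLex q).2 ∈ Icc 0 1} := by
  intro q hq q' hq' hqq'
  simp only [fillTime]
  have hgap := leftClock_le_clock hw hws (tseq := tseq) (ofLex q).1
  have hgap' := leftClock_le_clock hw hws (tseq := tseq) (ofLex q').1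
  rcases Prod.Lex.le_iff.1 hqq' with hlt | ⟨heq, hθ⟩
  · have := clock_lt_leftClock hw hws (tseq := tseq) hlt
    nlinarith [hq.1, hq.2, hq'.1, hq'.2]
  · rw [heq] at hgap ⊢
    nlinarith

end clock

theorem exists_fillTag {E : Type*} [NormedAddCommGroup E] [NormedSpace ℝ E] {tseq w : ℕ → ℝ}
    {T : ℝ} (hw : ∀ n, 0 ≤ w n) (hws : Summable w) (hinj : Function.Injective tseq)
    (htmem : ∀ n, tseq n ∈ Ioc 0 T) {x xm y : ℝ → E} {j : ℕ → E}
    (hj : ∀ n, j n = x (tseq n) - xm (tseq n))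
    (hmatch : ∀ t ∈ Icc 0 T, y (clock tseq w t) = x t)
    (hseg : ∀ n, ∀ s ∈ Ico (clock tseq w (tseq n) - w n) (clock tseq w (tseq n)),
      y s = xm (tseq n) + ((s - (clock tseq w (tseq n) - w n)) / w n) • j n) :
    ∀ s ∈ Icc 0 (clock tseq w T),
      ∃ q ∈ fillDomain T, fillTime tseq w q = s ∧ fillPath x xm q = y s := by
  intro s hs
  rw [← clock_eq_self (w := w) fun n => (htmem n).1] at hs
  obtain ⟨c, hc, hlc, hcs⟩ := exists_mem_Icc_leftClock_clock hw hws hs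
  rcases hcs.eq_or_lt with rfl | hlt
  · exact ⟨toLex (c, 1), ⟨hc, by simp, Or.inl rfl⟩, by simp [fillTime],
      by simp [fillPath, hmatch c hc]⟩
  obtain ⟨n, rfl⟩ : ∃ n, tseq n = c := by
    by_contra! h
    exact (hlc.trans_lt hlt).ne (leftClock_eq_clock h)
  have hgap := clock_sub_leftClock hw hws hinj n
  have hwn : 0 < w n := by linarith
  refine ⟨toLex (tseq n, (s - (clock tseq w (tseq n) - w n)) / w n),
    ⟨hc, ⟨div_nonneg (by linarith) hwn.le, (div_le_one hwn).2 (by linarith)⟩, Or.inr (htmem n).1⟩,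
    ?_, ?_⟩
  · simp only [fillTime, ofLex_toLex, hgap]
    field_simp
    linarith
  · rw [hseg n s ⟨by linarith, hlt⟩, hj]
    rfl

theorem stmt_1_general {d : ℕ} (p T δ : ℝ) (hp : 1 ≤ p) (hT : 0 < T) (hδ : 0 < δ)
    (x xm : ℝ → EuclideanSpace ℝ (Fin d))
    (hleft : ∀ t ∈ Set.Ioc 0 T, Tendsto x (nhdsWithin t (Set.Iio t)) (nhds (xm t)))
    (hfin : BddAbove (pVarSums p 0 T x))
    (tseq : ℕ → ℝ) (hinj : Function.Injective tseq)
    (htmem : ∀ n, tseq n ∈ Set.Ioc 0 T)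
    (j : ℕ → EuclideanSpace ℝ (Fin d)) (hj : ∀ n, j n = x (tseq n) - xm (tseq n))
    (hsum : Summable fun n => ‖j n‖ ^ p)
    (τ : ℝ → ℝ)
    (hτ : ∀ t, τ t = t + δ * ∑' n, if tseq n ≤ t then ‖j n‖ ^ p else 0)
    (xδ : ℝ → EuclideanSpace ℝ (Fin d))
    (hxδmatch : ∀ t ∈ Set.Icc 0 T, xδ (τ t) = x t)
    (hxδseg : ∀ n, ∀ s ∈ Set.Ico (τ (tseq n) - δ * ‖j n‖ ^ p) (τ (tseq n)),
      xδ s = xm (tseq n) +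
        ((s - (τ (tseq n) - δ * ‖j n‖ ^ p)) / (δ * ‖j n‖ ^ p)) • j n) :
    sSup (pVarSums p 0 (τ T) xδ) ^ (1 / p) = sSup (pVarSums p 0 T x) ^ (1 / p) := by
  set w : ℕ → ℝ := fun n => δ * ‖j n‖ ^ p
  have hw : ∀ n, 0 ≤ w n := fun n => by positivity
  have hws : Summable w := hsum.mul_left δ
  obtain rfl : τ = clock tseq w := funext fun t => by
    simp only [hτ, clock, w, ← tsum_mul_left, mul_ite, mul_zero]
  have hsub : pVarSums p 0 T x ⊆ pVarSums p 0 (clock tseq w T) xδ :=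
    pVarSums_subset_of_monotoneOn ((clock_strictMono hw hws).monotone.monotoneOn _)
      (clock_eq_self fun n => (htmem n).1) rfl hxδmatch
  have hle : ∀ S ∈ pVarSums p 0 (clock tseq w T) xδ, S ≤ sSup (pVarSums p 0 T x) :=
    fun S => le_sSup_pVarSums_of_fillPath hp hT.le hleft hfin
      ((monotoneOn_fillTime hw hws).mono fun q hq => hq.2.1)
      (exists_fillTag hw hws hinj htmem hj hxδmatch hxδseg)
  have hne := pVarSums_nonempty (p := p) (f := x) hT.le
  rw [le_antisymm (csSup_le (hne.mono hsub) hle) (csSup_le_csSup ⟨_, hle⟩ hne hsub)]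

/-- inserting fictitious time to traverse the jumps of a càdlàg path `x` of
finite `p`-variation linearly does not change the `p`-variation:
`‖x^δ‖_{p,[0,τ^δ(T)]} = ‖x‖_{p,[0,T]}`.

Here `tseq` enumerates (injectively) a set of times in `(0,T]` containing all
discontinuities of `x`, `xm t` is the left limit of `x` at `t`, `j n = x(t_n) − x(t_n⁻)`
is the jump at `t_n`, `τ = τ^δ` is the time change
`τ(t) = t + δ Σ_n ‖j n‖^p 1_{t_n ≤ t}`, and `xδ = x^δ` is the continuous path that
equals `x ∘ τ⁻¹` outside the inserted intervals and traverses each jump linearly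
during the inserted interval `[τ(t_n) − δ‖j n‖^p, τ(t_n))`. -/
theorem stmt_1 {d : ℕ} (p T δ : ℝ) (hp : 1 ≤ p) (hT : 0 < T) (hδ : 0 < δ)
    (x xm : ℝ → EuclideanSpace ℝ (Fin d))
    (hright : ∀ t ∈ Set.Ico 0 T, ContinuousWithinAt x (Set.Ici t) t)
    (hleft : ∀ t ∈ Set.Ioc 0 T, Tendsto x (nhdsWithin t (Set.Iio t)) (nhds (xm t)))
    (hfin : BddAbove (pVarSums p 0 T x))
    (tseq : ℕ → ℝ) (hinj : Function.Injective tseq)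
    (htmem : ∀ n, tseq n ∈ Set.Ioc 0 T)
    (hdisc : ∀ t ∈ Set.Ioc 0 T, x t ≠ xm t → ∃ n, tseq n = t)
    (j : ℕ → EuclideanSpace ℝ (Fin d)) (hj : ∀ n, j n = x (tseq n) - xm (tseq n))
    (hsum : Summable fun n => ‖j n‖ ^ p)
    (τ : ℝ → ℝ)
    (hτ : ∀ t, τ t = t + δ * ∑' n, if tseq n ≤ t then ‖j n‖ ^ p else 0)
    (xδ : ℝ → EuclideanSpace ℝ (Fin d))
    (hxδcont : ContinuousOn xδ (Set.Icc 0 (τ T)))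
    (hxδmatch : ∀ t ∈ Set.Icc 0 T, xδ (τ t) = x t)
    (hxδseg : ∀ n, ∀ s ∈ Set.Ico (τ (tseq n) - δ * ‖j n‖ ^ p) (τ (tseq n)),
      xδ s = xm (tseq n) +
        ((s - (τ (tseq n) - δ * ‖j n‖ ^ p)) / (δ * ‖j n‖ ^ p)) • j n) :
    sSup (pVarSums p 0 (τ T) xδ) ^ (1 / p) = sSup (pVarSums p 0 T x) ^ (1 / p) :=
  stmt_1_general p T δ hp hT hδ x xm hleft hfin tseq hinj htmem j hj hsum τ hτ xδ hxδmatch hxδseg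
end

section
/- For k ≥ 1 let J_k = ((k+1)^{−3(k+1)}, k^{−3k}] ⊂ (0,1], and let η be the measure on ℝ with density g with respect to Lebesgue measure, where g(x) = Σ_{k=1}^∞ |x|^{−3+1/k} · 1_{{|x| ∈ J_k}}(x). Then ∫_{{|x| ≤ 1}} |x|^2 dη(x) < ∞; in particular η satisfies the integrability condition defining a Lévy measure. -/
open MeasureTheory ENNReal

/-- The density `g(x) = Σ_{k≥1} |x|^{−3+1/k} · 1_{|x| ∈ J_k}(x)`, where
`J_k = ((k+1)^{−3(k+1)}, k^{−3k}]`.  (The series over `k ≥ 1` is indexed by `k : ℕ`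
via `k ↦ k+1`.) -/
noncomputable def levyDensity (x : ℝ) : ℝ :=
  ∑' k : ℕ,
    if |x| ∈ Set.Ioc (((k : ℝ) + 2) ^ (-(3 : ℝ) * ((k : ℝ) + 2)))
        (((k : ℝ) + 1) ^ (-(3 : ℝ) * ((k : ℝ) + 1)))
    then |x| ^ ((-3 : ℝ) + 1 / ((k : ℝ) + 1)) else 0

/-- The measure `η` on `ℝ` with density `g` with respect to Lebesgue measure. -/
noncomputable def levyEta : Measure ℝ :=
  volume.withDensity fun x => ENNReal.ofReal (levyDensity x)

/-!
On `|x| ∈ J_k` we have `|x|² g(x) = |x|^{-1+1/k}`, and dropping the left endpoint of `J_k`,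
`∫_{|x| ≤ k^{-3k}} |x|^{-1+1/k} dx = 2k (k^{-3k})^{1/k} = 2/k²`. Summing over `k` by monotone
convergence gives `∫ |x|² dη ≤ Σ 2/k² < ∞`.
-/

open Set

lemma ENNReal.ofReal_tsum_le_tsum_ofReal {ι : Type*} {f : ι → ℝ} (hf : ∀ i, 0 ≤ f i) :
    ENNReal.ofReal (∑' i, f i) ≤ ∑' i, ENNReal.ofReal (f i) := by
  by_cases hs : Summable f
  · exact (ENNReal.ofReal_tsum_of_nonneg hf hs).le
  · simp [tsum_eq_zero_of_not_summable hs]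

lemma lintegral_comp_abs (f : ℝ → ℝ≥0∞) : ∫⁻ x, f |x| = 2 * ∫⁻ x in Ioi 0, f x := by
  have hpos : ∫⁻ x in Ioi 0, f |x| = ∫⁻ x in Ioi 0, f x :=
    setLIntegral_congr_fun measurableSet_Ioi fun x hx => by rw [abs_of_pos hx]
  have hneg : ∫⁻ x in Iic 0, f |x| = ∫⁻ x in Ioi 0, f x := by
    have hemb : MeasurableEmbedding fun x : ℝ => -x := (Homeomorph.neg ℝ).measurableEmbedding
    conv_lhs => rw [← Measure.map_neg_eq_self (volume : Measure ℝ)]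
    rw [hemb.restrict_map, hemb.lintegral_map]
    simp only [neg_preimage, neg_Iic, neg_zero, abs_neg]
    rw [setLIntegral_congr Ioi_ae_eq_Ici.symm, hpos]
  rw [← setLIntegral_univ, ← Iic_union_Ioi (a := (0 : ℝ)),
    lintegral_union measurableSet_Ioi (Iic_disjoint_Ioi le_rfl), hneg, hpos, two_mul]

lemma lintegral_Ioc_rpow {b q : ℝ} (hb : 0 ≤ b) (hq : -1 < q) :
    ∫⁻ x in Ioc 0 b, ENNReal.ofReal (x ^ q) = ENNReal.ofReal (b ^ (q + 1) / (q + 1)) := by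
  have hint : IntegrableOn (fun x => x ^ q) (Ioc 0 b) :=
    (intervalIntegrable_iff_integrableOn_Ioc_of_le hb).1
      (intervalIntegral.intervalIntegrable_rpow' hq)
  have hnn : 0 ≤ᵐ[volume.restrict (Ioc 0 b)] fun x => x ^ q :=
    (ae_restrict_iff' measurableSet_Ioc).2 <| .of_forall fun x hx => Real.rpow_nonneg hx.1.le _
  rw [← ofReal_integral_eq_lintegral_ofReal hint hnn, ← intervalIntegral.integral_of_le hb,
    integral_rpow (Or.inl hq), Real.zero_rpow (by linarith), sub_zero]

noncomputable def levyRightEnd (k : ℕ) : ℝ := ((k : ℝ) + 1) ^ (-(3 : ℝ) * ((k : ℝ) + 1))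

lemma levyRightEnd_pos (k : ℕ) : 0 < levyRightEnd k := Real.rpow_pos_of_pos (by positivity) _

noncomputable def levyTerm (k : ℕ) (x : ℝ) : ℝ :=
  if |x| ∈ Ioc (((k : ℝ) + 2) ^ (-(3 : ℝ) * ((k : ℝ) + 2))) (levyRightEnd k)
  then |x| ^ ((-3 : ℝ) + 1 / ((k : ℝ) + 1)) else 0

lemma levyDensity_eq_tsum (x : ℝ) : levyDensity x = ∑' k, levyTerm k x := rfl

lemma levyTerm_nonneg (k : ℕ) (x : ℝ) : 0 ≤ levyTerm k x := by
  unfold levyTerm; split_ifs <;> positivity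

@[fun_prop]
lemma measurable_levyTerm (k : ℕ) : Measurable (levyTerm k) :=
  Measurable.ite (measurable_abs measurableSet_Ioc) (by fun_prop) measurable_const

lemma levyTerm_mul_sq_le (k : ℕ) (x : ℝ) :
    ENNReal.ofReal (levyTerm k x) * ENNReal.ofReal (|x| ^ (2 : ℝ)) ≤
      (Ioc 0 (levyRightEnd k)).indicator
        (fun t => ENNReal.ofReal (t ^ ((-1 : ℝ) + 1 / ((k : ℝ) + 1)))) |x| := by
  unfold levyTerm
  split_ifs with hx
  · have hx0 : 0 < |x| := lt_of_le_of_lt (by positivity) hx.1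
    rw [indicator_of_mem (show |x| ∈ Ioc 0 _ from ⟨hx0, hx.2⟩),
      ← ENNReal.ofReal_mul (by positivity), ← Real.rpow_add hx0,
      show (-3 : ℝ) + 1 / ((k : ℝ) + 1) + 2 = -1 + 1 / ((k : ℝ) + 1) by ring]
  · simp

lemma lintegral_levyTerm_mul_sq_le (k : ℕ) :
    ∫⁻ x, ENNReal.ofReal (levyTerm k x) * ENNReal.ofReal (|x| ^ (2 : ℝ)) ≤
      2 * ENNReal.ofReal (1 / ((k : ℝ) + 1) ^ 2) := by
  have hk : (0 : ℝ) < (k : ℝ) + 1 := by positivity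
  have hq : (-1 : ℝ) < -1 + 1 / ((k : ℝ) + 1) := by simp [hk]
  have hb : levyRightEnd k ^ (-1 + 1 / ((k : ℝ) + 1) + 1) / (-1 + 1 / ((k : ℝ) + 1) + 1)
      = 1 / ((k : ℝ) + 1) ^ 2 := by
    rw [levyRightEnd, neg_add_cancel_comm, ← Real.rpow_mul hk.le,
      show -(3 : ℝ) * ((k : ℝ) + 1) * (1 / ((k : ℝ) + 1)) = -(3 : ℕ) by field_simp; norm_num,
      Real.rpow_neg hk.le, Real.rpow_natCast]
    field_simp
  calc ∫⁻ x, ENNReal.ofReal (levyTerm k x) * ENNReal.ofReal (|x| ^ (2 : ℝ))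
      ≤ ∫⁻ x, (Ioc 0 (levyRightEnd k)).indicator
          (fun t => ENNReal.ofReal (t ^ ((-1 : ℝ) + 1 / ((k : ℝ) + 1)))) |x| :=
        lintegral_mono (levyTerm_mul_sq_le k)
    _ ≤ 2 * ∫⁻ t, (Ioc 0 (levyRightEnd k)).indicator
          (fun t => ENNReal.ofReal (t ^ ((-1 : ℝ) + 1 / ((k : ℝ) + 1)))) t := by
        rw [lintegral_comp_abs]
        gcongr
        exact Measure.restrict_le_self
    _ = 2 * ENNReal.ofReal (1 / ((k : ℝ) + 1) ^ 2) := by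
        rw [lintegral_indicator measurableSet_Ioc,
          lintegral_Ioc_rpow (levyRightEnd_pos k).le hq, hb]

lemma lintegral_sq_levyEta_lt_top : ∫⁻ x, ENNReal.ofReal (|x| ^ (2 : ℝ)) ∂levyEta < ⊤ := by
  have hdens : levyEta ≤ volume.withDensity fun x => ∑' k, ENNReal.ofReal (levyTerm k x) :=
    withDensity_mono <| .of_forall fun x => by
      simpa only [levyDensity_eq_tsum] using
        ENNReal.ofReal_tsum_le_tsum_ofReal (levyTerm_nonneg · x)
  have hsum : Summable fun k : ℕ => 1 / ((k : ℝ) + 1) ^ 2 := by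
    simpa using (summable_nat_add_iff 1).2 (Real.summable_one_div_nat_pow.2 one_lt_two)
  calc ∫⁻ x, ENNReal.ofReal (|x| ^ (2 : ℝ)) ∂levyEta
      ≤ ∫⁻ x, ENNReal.ofReal (|x| ^ (2 : ℝ))
          ∂volume.withDensity fun x => ∑' k, ENNReal.ofReal (levyTerm k x) :=
        lintegral_mono' hdens le_rfl
    _ = ∑' k, ∫⁻ x, ENNReal.ofReal (levyTerm k x) * ENNReal.ofReal (|x| ^ (2 : ℝ)) := by
        rw [lintegral_withDensity_eq_lintegral_mul _ (by fun_prop) (by fun_prop),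
          ← lintegral_tsum (by fun_prop)]
        simp only [Pi.mul_apply, ENNReal.tsum_mul_right]
    _ ≤ ∑' k : ℕ, 2 * ENNReal.ofReal (1 / ((k : ℝ) + 1) ^ 2) :=
        ENNReal.tsum_le_tsum lintegral_levyTerm_mul_sq_le
    _ < ⊤ := by
        rw [ENNReal.tsum_mul_left, ← ENNReal.ofReal_tsum_of_nonneg (fun _ => by positivity) hsum]
        exact ENNReal.mul_lt_top (by norm_num) ofReal_lt_top

/-- `∫_{|x|≤1} |x|² dη < ∞`; in particular `η` satisfies the integrability
condition `∫ (|x|² ∧ 1) dη < ∞` defining a Lévy measure. -/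
theorem stmt_2 :
    (∫⁻ x in {x : ℝ | |x| ≤ 1}, ENNReal.ofReal (|x| ^ (2 : ℝ)) ∂levyEta) < ⊤ ∧
    (∫⁻ x, ENNReal.ofReal (min (|x| ^ (2 : ℝ)) 1) ∂levyEta) < ⊤ :=
  ⟨(setLIntegral_le_lintegral _ _).trans_lt lintegral_sq_levyEta_lt_top,
    (lintegral_mono fun _ => ofReal_le_ofReal (min_le_left _ _)).trans_lt
      lintegral_sq_levyEta_lt_top⟩
end

section
/- For k ≥ 1 let J_k = ((k+1)^{−3(k+1)}, k^{−3k}] ⊂ (0,1], and let η be the measure on ℝ with density g with respect to Lebesgue measure, where g(x) = Σ_{k=1}^∞ |x|^{−3+1/k} · 1_{{|x| ∈ J_k}}(x). Then for every α with 0 < α < 2 one has ∫_{{|x| ≤ 1}} |x|^α dη(x) = ∞. -/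
open MeasureTheory ENNReal

/-- endpoints of the intervals -/
noncomputable def bb (k : ℕ) : ℝ := ((k : ℝ) + 1) ^ (-(3 : ℝ) * ((k : ℝ) + 1))

lemma bb_pos (k : ℕ) : 0 < bb k :=
  Real.rpow_pos_of_pos (by positivity) _

lemma bb_le_one (k : ℕ) : bb k ≤ 1 := by
  have h0 : (0:ℝ) ≤ (k:ℝ) := k.cast_nonneg
  exact Real.rpow_le_one_of_one_le_of_nonpos (by linarith) (by nlinarith)

lemma bb_succ (k : ℕ) : bb (k + 1) = ((k : ℝ) + 2) ^ (-(3 : ℝ) * ((k : ℝ) + 2)) := by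
  unfold bb
  push_cast
  ring_nf

lemma bb_succ_lt (k : ℕ) : bb (k + 1) < bb k := by
  rw [bb_succ]
  unfold bb
  set u : ℝ := (k : ℝ) + 1 with hu
  set v : ℝ := (k : ℝ) + 2 with hv
  have hk0 : (0:ℝ) ≤ (k:ℝ) := k.cast_nonneg
  have hu1 : (1:ℝ) ≤ u := by simp [hu]
  have hu0 : (0:ℝ) < u := by linarith
  have hv0 : (0:ℝ) < v := by positivity
  have huv : u < v := by simp [hu, hv]
  have h1 : u ^ (3 * u) < v ^ (3 * v) := by
    calc u ^ (3 * u) < v ^ (3 * u) := Real.rpow_lt_rpow hu0.le huv (by positivity)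
    _ ≤ v ^ (3 * v) := Real.rpow_le_rpow_of_exponent_le (by linarith) (by linarith)
  have e1 : u ^ (-(3:ℝ) * u) = (u ^ ((3:ℝ) * u))⁻¹ := by
    rw [← Real.rpow_neg hu0.le]; ring_nf
  have e2 : v ^ (-(3:ℝ) * v) = (v ^ ((3:ℝ) * v))⁻¹ := by
    rw [← Real.rpow_neg hv0.le]; ring_nf
  rw [e1, e2]
  exact inv_strictAnti₀ (Real.rpow_pos_of_pos hu0 _) h1

lemma bb_anti : StrictAnti bb := strictAnti_nat_of_succ_lt bb_succ_lt

lemma bb_succ_le_half (k : ℕ) (hk : 1 ≤ k) : bb (k + 1) ≤ bb k / 2 := by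
  rw [bb_succ]
  have hk1 : (1:ℝ) ≤ (k:ℝ) := by exact_mod_cast hk
  have hu0 : (0:ℝ) < (k:ℝ) + 1 := by linarith
  have h1 : ((k : ℝ) + 2) ^ (-(3 : ℝ) * ((k : ℝ) + 2)) ≤
      ((k : ℝ) + 1) ^ (-(3 : ℝ) * ((k : ℝ) + 2)) :=
    Real.rpow_le_rpow_of_nonpos hu0 (by linarith) (by nlinarith)
  have h2 : ((k : ℝ) + 1) ^ (-(3 : ℝ) * ((k : ℝ) + 2)) = bb k * ((k:ℝ)+1) ^ (-(3:ℝ)) := by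
    unfold bb
    rw [← Real.rpow_add hu0]
    ring_nf
  have h3 : ((k:ℝ)+1) ^ (-(3:ℝ)) ≤ 1 / 2 := by
    rw [Real.rpow_neg hu0.le]
    rw [show ((k:ℝ)+1) ^ (3:ℝ) = ((k:ℝ)+1) ^ (3:ℕ) by
      rw [← Real.rpow_natCast]; norm_num]
    rw [inv_le_iff_one_le_mul₀ (by positivity)]
    have h8 : (2:ℝ)^(3:ℕ) ≤ ((k:ℝ)+1)^(3:ℕ) := pow_le_pow_left₀ (by norm_num) (by linarith) 3
    norm_num at h8 ⊢
    linarith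
  calc ((k : ℝ) + 2) ^ (-(3 : ℝ) * ((k : ℝ) + 2)) ≤ bb k * ((k:ℝ)+1) ^ (-(3:ℝ)) := by
        rw [← h2]; exact h1
  _ ≤ bb k * (1/2) := by
        have := (bb_pos k).le
        exact mul_le_mul_of_nonneg_left h3 this
  _ = bb k / 2 := by ring

lemma levyDensity_eq_on (k : ℕ) {x : ℝ} (hx : x ∈ Set.Ioc (bb (k+1)) (bb k)) :
    levyDensity x = x ^ ((-3 : ℝ) + 1 / ((k : ℝ) + 1)) := by
  have hx0 : 0 < x := lt_trans (bb_pos (k+1)) hx.1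
  have habs : |x| = x := abs_of_pos hx0
  unfold levyDensity
  rw [show (∑' j : ℕ,
      if |x| ∈ Set.Ioc (((j : ℝ) + 2) ^ (-(3 : ℝ) * ((j : ℝ) + 2)))
          (((j : ℝ) + 1) ^ (-(3 : ℝ) * ((j : ℝ) + 1)))
      then |x| ^ ((-3 : ℝ) + 1 / ((j : ℝ) + 1)) else 0) =
      (if |x| ∈ Set.Ioc (((k : ℝ) + 2) ^ (-(3 : ℝ) * ((k : ℝ) + 2)))
          (((k : ℝ) + 1) ^ (-(3 : ℝ) * ((k : ℝ) + 1)))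
      then |x| ^ ((-3 : ℝ) + 1 / ((k : ℝ) + 1)) else 0) from
    tsum_eq_single k (by
      intro j hj
      rw [if_neg]
      rw [habs, ← bb_succ]
      show x ∉ Set.Ioc (bb (j+1)) (bb j)
      intro hxj
      rcases lt_or_gt_of_ne hj with h | h
      · -- j < k : bb k ≤ bb (j+1)
        have : bb k ≤ bb (j+1) := bb_anti.antitone (by omega)
        exact absurd hxj.1 (not_lt.2 (hx.2.trans this))
      · -- k < j : bb j ≤ bb (k+1)
        have : bb j ≤ bb (k+1) := bb_anti.antitone (by omega)
        exact absurd hxj.2 (not_le.2 (lt_of_le_of_lt this hx.1)))]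
  rw [if_pos, habs]
  rw [habs, ← bb_succ]
  show x ∈ Set.Ioc (bb (k+1)) (bb k)
  · exact hx

/-- the main lower bound for a single interval -/
lemma single_interval_bound (α : ℝ) (hα2 : α < 2) (k : ℕ) :
    ENNReal.ofReal (bb k ^ (α + ((-3 : ℝ) + 1 / ((k : ℝ) + 1))) * (bb k - bb (k+1))) ≤
      ∫⁻ x in {x : ℝ | |x| ≤ 1}, ENNReal.ofReal (|x| ^ α) ∂levyEta := by
  set q : ℝ := (-3 : ℝ) + 1 / ((k : ℝ) + 1) with hq
  set S : Set ℝ := Set.Ioc (bb (k+1)) (bb k) with hS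
  have hSm : MeasurableSet S := measurableSet_Ioc
  have hsub : S ⊆ {x : ℝ | |x| ≤ 1} := by
    intro x hx
    have hx0 : 0 < x := lt_trans (bb_pos (k+1)) hx.1
    have : x ≤ 1 := hx.2.trans (bb_le_one k)
    simp only [Set.mem_setOf_eq, abs_le]
    constructor <;> linarith
  refine le_trans ?_ (lintegral_mono_set hsub)
  -- rewrite the restricted measure
  have hrw : levyEta.restrict S =
      (volume.restrict S).withDensity (fun x => ENNReal.ofReal (x ^ q)) := by
    rw [levyEta, restrict_withDensity hSm]
    refine withDensity_congr_ae ?_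
    filter_upwards [self_mem_ae_restrict hSm] with x hx
    rw [levyDensity_eq_on k hx]
  rw [hrw]
  have hmeas : Measurable fun x : ℝ => ENNReal.ofReal (x ^ q) := by
    exact (measurable_id.pow_const q).ennreal_ofReal
  rw [lintegral_withDensity_eq_lintegral_mul _ hmeas
    ((measurable_abs.pow_const α).ennreal_ofReal)]
  have hpt : ∀ x ∈ S, ENNReal.ofReal (bb k ^ (α + q)) ≤
      ((fun x => ENNReal.ofReal (x ^ q)) * fun x => ENNReal.ofReal (|x| ^ α)) x := by
    intro x hx
    have hx0 : 0 < x := lt_trans (bb_pos (k+1)) hx.1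
    have habs : |x| = x := abs_of_pos hx0
    simp only [Pi.mul_apply, habs]
    rw [← ENNReal.ofReal_mul (Real.rpow_nonneg hx0.le _), ← Real.rpow_add hx0]
    refine ENNReal.ofReal_le_ofReal ?_
    rw [show q + α = α + q by ring]
    refine Real.rpow_le_rpow_of_nonpos hx0 hx.2 ?_
    have h1 : 1 / ((k : ℝ) + 1) ≤ 1 := by
      rw [div_le_one (by positivity)]
      have : (0:ℝ) ≤ (k:ℝ) := k.cast_nonneg
      linarith
    have hq2 : q ≤ -2 := by rw [hq]; linarith
    linarith
  calc ENNReal.ofReal (bb k ^ (α + q) * (bb k - bb (k+1)))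
      = ENNReal.ofReal (bb k ^ (α + q)) * ENNReal.ofReal (bb k - bb (k+1)) := by
        rw [ENNReal.ofReal_mul (Real.rpow_nonneg (bb_pos k).le _)]
    _ = ENNReal.ofReal (bb k ^ (α + q)) * volume S := by rw [hS, Real.volume_Ioc]
    _ = ∫⁻ _ in S, ENNReal.ofReal (bb k ^ (α + q)) ∂volume := (setLIntegral_const S _).symm
    _ ≤ ∫⁻ x in S, ((fun x => ENNReal.ofReal (x ^ q)) * fun x => ENNReal.ofReal (|x| ^ α)) x ∂volume :=
        setLIntegral_mono (hmeas.mul (measurable_abs.pow_const α).ennreal_ofReal) hpt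

/-- for every `0 < α < 2`, `∫_{|x|≤1} |x|^α dη = ∞`. -/
theorem stmt_3 (α : ℝ) (hα0 : 0 < α) (hα2 : α < 2) :
    (∫⁻ x in {x : ℝ | |x| ≤ 1}, ENNReal.ofReal (|x| ^ α) ∂levyEta) = ⊤ := by
  refine ENNReal.eq_top_of_forall_nnreal_le fun r => ?_
  have hε0 : (0:ℝ) < 2 - α := by linarith
  obtain ⟨k, hk1, hkr, hke⟩ : ∃ k : ℕ, 1 ≤ k ∧ 2 * (r:ℝ) ≤ (k:ℝ) + 1 ∧ 2 / (2-α) ≤ (k:ℝ) := by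
    refine ⟨max 1 (max ⌈2 * (r:ℝ)⌉₊ ⌈2 / (2-α)⌉₊), le_max_left _ _, ?_, ?_⟩
    · have h1 : (⌈2 * (r:ℝ)⌉₊ : ℝ) ≤ ((max 1 (max ⌈2 * (r:ℝ)⌉₊ ⌈2 / (2-α)⌉₊) : ℕ) : ℝ) := by
        exact_mod_cast (le_max_left _ _).trans (le_max_right 1 _)
      have h2 := Nat.le_ceil (2 * (r:ℝ))
      linarith
    · have h1 : (⌈2 / (2-α)⌉₊ : ℝ) ≤ ((max 1 (max ⌈2 * (r:ℝ)⌉₊ ⌈2 / (2-α)⌉₊) : ℕ) : ℝ) := by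
        exact_mod_cast (le_max_right _ _).trans (le_max_right 1 _)
      have h2 := Nat.le_ceil (2 / (2-α))
      linarith
  refine le_trans ?_ (single_interval_bound α hα2 k)
  rw [← ENNReal.ofReal_coe_nnreal]
  refine ENNReal.ofReal_le_ofReal ?_
  set q : ℝ := (-3:ℝ) + 1/((k:ℝ)+1) with hqdef
  have hb0 := bb_pos k
  have hhalf := bb_succ_le_half k hk1
  have hbq : 0 < bb k ^ (α + q) := Real.rpow_pos_of_pos hb0 _
  have step1 : bb k ^ (α + q) * (bb k / 2) ≤ bb k ^ (α + q) * (bb k - bb (k+1)) :=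
    mul_le_mul_of_nonneg_left (by linarith) hbq.le
  have step2 : bb k ^ (α + q) * (bb k / 2) = bb k ^ (α + q + 1) / 2 := by
    rw [Real.rpow_add_one (ne_of_gt hb0)]; ring
  have hkpos : (0:ℝ) < (k:ℝ) + 1 := by positivity
  have hk1' : (1:ℝ) ≤ (k:ℝ) + 1 := by
    have : (0:ℝ) ≤ (k:ℝ) := k.cast_nonneg
    linarith
  set e : ℝ := (-(3:ℝ) * ((k:ℝ)+1)) * (α + q + 1) with he
  have step3 : bb k ^ (α + q + 1) = ((k:ℝ)+1) ^ e := by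
    rw [he]
    unfold bb
    rw [← Real.rpow_mul hkpos.le]
  have he1 : (1:ℝ) ≤ e := by
    rw [he, hqdef]
    have h2 : 2 ≤ (k:ℝ) * (2 - α) := (div_le_iff₀ hε0).mp hke
    have hrw : -(3:ℝ) * ((k:ℝ)+1) * (α + ((-3:ℝ) + 1/((k:ℝ)+1)) + 1) =
        3*((k:ℝ)+1)*(2-α) - 3 := by
      field_simp
      ring
    rw [hrw]
    nlinarith
  have step4 : (k:ℝ) + 1 ≤ ((k:ℝ)+1) ^ e := by
    calc (k:ℝ)+1 = ((k:ℝ)+1) ^ (1:ℝ) := (Real.rpow_one _).symm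
    _ ≤ _ := Real.rpow_le_rpow_of_exponent_le hk1' he1
  linarith
end

section
/- Let T > 0, p > 2, γ > p − 1. Let X = (X¹, X²) : [0,T] → ℝ² and let A be a real-valued function on {(s,t) : 0 ≤ s ≤ t ≤ T} satisfying the Chen relation A(s,u) = A(s,t) + A(t,u) + ½[(X¹(t)−X¹(s))(X²(u)−X²(t)) − (X²(t)−X²(s))(X¹(u)−X¹(t))] for all s ≤ t ≤ u. Suppose the weighted dyadic sums K₁ = Σ_{n=1}^∞ n^γ Σ_{k=0}^{2^n−1} |A(k2^{−n}T, (k+1)2^{−n}T)|^{p/2} and K₂ = Σ_{n=1}^∞ n^γ Σ_{k=0}^{2^n−1} ‖X((k+1)2^{−n}T) − X(k2^{−n}T)‖^p are both finite. Then there exist constants C₁, C₂ depending only on p and γ such that for every finite partition 0 = t_0 < t_1 < … < t_m = T of [0,T] whose points are dyadic multiples of T (i.e. each t_i = k 2^{−n} T for some integers k, n), Σ_{i=1}^m |A(t_{i−1}, t_i)|^{p/2} ≤ C₁ K₁ + C₂ K₂. In particular the (p/2)-variation of A along dyadic partition points is finite. -/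
/-!
Work on a grid of mesh `T / 2 ^ N` containing all partition points. Split an interval `[u, v]`
of this grid at the midpoint `m` of the smallest dyadic interval containing it; rounding `u` up
and `v` down to coarser and coarser grids gives a chain from `u` through `m` to `v` made of at
most two dyadic intervals of each level `1, …, N`. Along the chain the Chen relation bounds
`|A(u, v)|` by the sum of the `|A|` over the steps plus half the squared length of `X` along it.
The weighted Hölder inequality with weights `n ^ γ` (the dual weights `n ^ (-γ / (r - 1))` are
summable since `γ > p - 1`) turns the powers `r = p / 2` and `r = p` of these sums into weighted
dyadic sums. Different partition intervals use disjoint dyadic intervals, so summing over the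
partition gives `C₁ K₁ + C₂ K₂`.
-/

open Finset

lemma Real.add_rpow_le_two_rpow_mul {a b r : ℝ} (ha : 0 ≤ a) (hb : 0 ≤ b) (hr : 1 ≤ r) :
    (a + b) ^ r ≤ 2 ^ (r - 1) * (a ^ r + b ^ r) := by
  lift a to NNReal using ha
  lift b to NNReal using hb
  exact_mod_cast NNReal.rpow_add_le_mul_rpow_add_rpow a b hr

lemma Real.rpow_sum_le_weighted_sum_rpow {ι : Type*} (s : Finset ι) {r γ : ℝ} (hr : 1 < r)
    (ℓ b : ι → ℝ) (hℓ : ∀ i, 0 < ℓ i) (hb : ∀ i, 0 ≤ b i) :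
    (∑ i ∈ s, b i) ^ r ≤
      (∑ i ∈ s, ℓ i ^ (-(γ / (r - 1)))) ^ (r - 1) * ∑ i ∈ s, ℓ i ^ γ * b i ^ r := by
  set γ' := γ / (r - 1)
  have hγ' : γ' * (r - 1) = γ := div_mul_cancel₀ γ (by linarith)
  have hw : ∀ i, ℓ i ^ (-γ') * (ℓ i ^ γ' * b i) = b i := fun i => by
    rw [← mul_assoc, ← Real.rpow_add (hℓ i), neg_add_cancel, Real.rpow_zero, one_mul]
  have hwr : ∀ i, ℓ i ^ (-γ') * (ℓ i ^ γ' * b i) ^ r = ℓ i ^ γ * b i ^ r := fun i => by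
    rw [Real.mul_rpow (Real.rpow_nonneg (hℓ i).le _) (hb i), ← mul_assoc,
      ← Real.rpow_mul (hℓ i).le, ← Real.rpow_add (hℓ i)]
    congr 2
    linear_combination hγ'
  have H := Real.inner_le_weight_mul_Lp_of_nonneg s hr.le (fun i => ℓ i ^ (-γ'))
    (fun i => ℓ i ^ γ' * b i) (fun i => Real.rpow_nonneg (hℓ i).le _)
    (fun i => mul_nonneg (Real.rpow_nonneg (hℓ i).le _) (hb i))
  simp only [hw, hwr] at H
  have hW : 0 ≤ ∑ i ∈ s, ℓ i ^ (-γ') := sum_nonneg fun i _ => Real.rpow_nonneg (hℓ i).le _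
  have hS : 0 ≤ ∑ i ∈ s, ℓ i ^ γ * b i ^ r :=
    sum_nonneg fun i _ => mul_nonneg (Real.rpow_nonneg (hℓ i).le _) (Real.rpow_nonneg (hb i) _)
  calc (∑ i ∈ s, b i) ^ r
      ≤ ((∑ i ∈ s, ℓ i ^ (-γ')) ^ (1 - r⁻¹) * (∑ i ∈ s, ℓ i ^ γ * b i ^ r) ^ r⁻¹) ^ r :=
        Real.rpow_le_rpow (sum_nonneg fun i _ => hb i) H (by linarith)
    _ = _ := by
        rw [Real.mul_rpow (Real.rpow_nonneg hW _) (Real.rpow_nonneg hS _), ← Real.rpow_mul hW,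
          ← Real.rpow_mul hS, inv_mul_cancel₀ (by linarith), Real.rpow_one]
        congr 1
        field_simp

lemma rpow_le_of_le_add_half_sq {α a s p : ℝ} (hp : 2 ≤ p) (hα : 0 ≤ α) (ha : 0 ≤ a) (hs : 0 ≤ s)
    (h : α ≤ a + 1 / 2 * s ^ 2) :
    α ^ (p / 2) ≤ 2 ^ (p / 2 - 1) * (a ^ (p / 2) + (1 / 2) ^ (p / 2) * s ^ p) := by
  have hsq : (1 / 2 * s ^ 2) ^ (p / 2) = (1 / 2) ^ (p / 2) * s ^ p := by
    rw [Real.mul_rpow (by norm_num) (by positivity), ← Real.rpow_natCast, ← Real.rpow_mul hs,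
      Nat.cast_ofNat, show (2 : ℝ) * (p / 2) = p by ring]
  rw [← hsq]
  exact (Real.rpow_le_rpow hα h (by linarith)).trans
    (Real.add_rpow_le_two_rpow_mul ha (by positivity) (by linarith))

lemma summable_nat_add_one_rpow_neg {s : ℝ} (hs : 1 < s) :
    Summable fun n : ℕ => ((n : ℝ) + 1) ^ (-s) := by
  have := (summable_nat_add_iff 1).2 (Real.summable_nat_rpow.2 (by linarith : -s < -1))
  simpa only [Nat.cast_add, Nat.cast_one] using this

lemma abs_cross_le_norm_mul_norm (a b : EuclideanSpace ℝ (Fin 2)) :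
    |a 0 * b 1 - a 1 * b 0| ≤ ‖a‖ * ‖b‖ := by
  refine abs_le_of_sq_le_sq ?_ (by positivity)
  rw [mul_pow, EuclideanSpace.real_norm_sq_eq, EuclideanSpace.real_norm_sq_eq, Fin.sum_univ_two,
    Fin.sum_univ_two]
  nlinarith [sq_nonneg (a 0 * b 0 + a 1 * b 1)]

def ChenRelation (T : ℝ) (X : ℝ → EuclideanSpace ℝ (Fin 2)) (A : ℝ → ℝ → ℝ) : Prop :=
  ∀ s t u : ℝ, 0 ≤ s → s ≤ t → t ≤ u → u ≤ T →
    A s u = A s t + A t u +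
      (1 / 2) * ((X t 0 - X s 0) * (X u 1 - X t 1) - (X t 1 - X s 1) * (X u 0 - X t 0))

namespace ChenRelation

variable {T : ℝ} {X : ℝ → EuclideanSpace ℝ (Fin 2)} {A : ℝ → ℝ → ℝ}

lemma apply_self (chen : ChenRelation T X A) {s : ℝ} (h0 : 0 ≤ s) (hT : s ≤ T) : A s s = 0 := by
  have := chen s s s h0 le_rfl le_rfl hT
  simp only [sub_self, mul_zero, add_zero] at this
  linarith

lemma abs_le (chen : ChenRelation T X A) {s t u : ℝ} (h0 : 0 ≤ s) (hst : s ≤ t) (htu : t ≤ u)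
    (hT : u ≤ T) :
    |A s u| ≤ |A s t| + |A t u| + 1 / 2 * (‖X t - X s‖ * ‖X u - X t‖) := by
  have hcross := abs_cross_le_norm_mul_norm (X t - X s) (X u - X t)
  simp only [PiLp.sub_apply] at hcross
  rw [chen s t u h0 hst htu hT]
  refine (abs_add_le _ _).trans (add_le_add (abs_add_le _ _) ?_)
  rw [abs_mul, abs_of_pos (by norm_num : (0 : ℝ) < 1 / 2)]
  gcongr

lemma abs_le_sum_add_sq (chen : ChenRelation T X A) {w : ℕ → ℝ} (hw : Monotone w)
    (h0 : 0 ≤ w 0) (M : ℕ) (hM : w M ≤ T) :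
    |A (w 0) (w M)| ≤ ∑ j ∈ range M, |A (w j) (w (j + 1))|
      + 1 / 2 * (∑ j ∈ range M, ‖X (w (j + 1)) - X (w j)‖) ^ 2 := by
  induction M with
  | zero => simp [chen.apply_self h0 hM]
  | succ M ih =>
    have hM' : w M ≤ T := (hw (Nat.le_add_right M 1)).trans hM
    have hlen : ‖X (w M) - X (w 0)‖ ≤ ∑ j ∈ range M, ‖X (w (j + 1)) - X (w j)‖ := by
      simpa only [dist_eq_norm'] using dist_le_range_sum_dist (fun j => X (w j)) M
    have hstep := chen.abs_le h0 (hw (Nat.zero_le M)) (hw (Nat.le_add_right M 1)) hM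
    set S := ∑ j ∈ range M, ‖X (w (j + 1)) - X (w j)‖
    set x := ‖X (w (M + 1)) - X (w M)‖
    have hS : 0 ≤ S := sum_nonneg fun j _ => norm_nonneg _
    have hx : 0 ≤ x := norm_nonneg _
    rw [sum_range_succ, sum_range_succ]
    nlinarith [ih hM', mul_le_mul_of_nonneg_right hlen hx, mul_nonneg hS hx]

end ChenRelation

def IsAlignedStep (e a b : ℕ) : Prop := a = b ∨ (e ∣ a ∧ b = a + e)

lemma IsAlignedStep.le {e a b : ℕ} (h : IsAlignedStep e a b) : a ≤ b := by
  rcases h with rfl | ⟨-, rfl⟩ <;> omega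

lemma Nat.div_mul_mul_two_eq {y e : ℕ} : y / (e * 2) * (e * 2) = y / e / 2 * 2 * e := by
  rw [← Nat.div_div_eq_div_mul]; ring

lemma isAlignedStep_sub_floor {x m e : ℕ} (hx : x ≤ m) (h : x < e ∨ e ∣ m) :
    IsAlignedStep e (m - x / e * e) (m - x / (e * 2) * (e * 2)) := by
  rw [Nat.div_mul_mul_two_eq]
  rcases h with hxe | hdvd
  · left
    simp [Nat.div_eq_of_lt hxe]
  · have hle : x / e * e ≤ m := (Nat.div_mul_le_self x e).trans hx
    obtain ⟨r, hr | hr⟩ := Nat.even_or_odd' (x / e)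
    · left
      rw [hr, show 2 * r / 2 = r by omega]
      ring_nf
    · right
      refine ⟨Nat.dvd_sub hdvd (dvd_mul_left _ _), ?_⟩
      rw [hr] at hle
      rw [hr, show (2 * r + 1) / 2 = r by omega]
      have : r * 2 * e + e = (2 * r + 1) * e := by ring
      omega

lemma isAlignedStep_add_floor {y m e : ℕ} (h : y < e ∨ e ∣ m) :
    IsAlignedStep e (m + y / (e * 2) * (e * 2)) (m + y / e * e) := by
  rw [Nat.div_mul_mul_two_eq]
  rcases h with hye | hdvd
  · left
    rw [Nat.div_eq_of_lt hye]
  · obtain ⟨r, hr | hr⟩ := Nat.even_or_odd' (y / e)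
    · left
      rw [hr, show 2 * r / 2 = r by omega]
      ring
    · right
      rw [hr, show (2 * r + 1) / 2 = r by omega]
      exact ⟨dvd_add hdvd (dvd_mul_left _ _), by ring⟩

/-- `m` is the midpoint of the smallest dyadic interval containing `[u, v]`. -/
lemma exists_dyadic_midpoint (N : ℕ) {u v : ℕ} (huv : u ≤ v) (hv : v ≤ 2 ^ (N + 1)) :
    ∃ i ≤ N, ∃ m, u ≤ m ∧ m ≤ v ∧ 2 ^ i ∣ m ∧ m - u ≤ 2 ^ i ∧ v - m ≤ 2 ^ i := by
  induction N generalizing u v with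
  | zero =>
    rw [zero_add, pow_one] at hv
    exact ⟨0, le_rfl, (u + v) / 2, by omega, by omega, one_dvd _, by rw [pow_zero]; omega,
      by rw [pow_zero]; omega⟩
  | succ N ih =>
    have h2 : 2 ^ (N + 1 + 1) = 2 ^ (N + 1) + 2 ^ (N + 1) := by ring
    by_cases hlo : u ≤ 2 ^ (N + 1) ∧ 2 ^ (N + 1) ≤ v
    · exact ⟨N + 1, le_rfl, 2 ^ (N + 1), hlo.1, hlo.2, dvd_rfl, by omega, by omega⟩
    by_cases hleft : v < 2 ^ (N + 1)
    · obtain ⟨i, hi, m, h⟩ := ih huv hleft.le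
      exact ⟨i, hi.trans N.le_succ, m, h⟩
    obtain ⟨i, hi, m, hum, hmv, hdvd, hmu, hvm⟩ :=
      ih (u := u - 2 ^ (N + 1)) (v := v - 2 ^ (N + 1)) (by omega) (by omega)
    refine ⟨i, hi.trans N.le_succ, m + 2 ^ (N + 1), by omega, by omega,
      dvd_add hdvd (pow_dvd_pow 2 (by omega)), by omega, by omega⟩

lemma lt_pow_or_pow_dvd {x m i : ℕ} (hx : x ≤ 2 ^ i) (hm : 2 ^ i ∣ m) (k : ℕ) :
    x < 2 ^ k ∨ 2 ^ k ∣ m := by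
  rcases le_or_gt k i with hk | hk
  · exact Or.inr ((pow_dvd_pow 2 hk).trans hm)
  · exact Or.inl (hx.trans_lt (Nat.pow_lt_pow_right (by norm_num) hk))

/-- The dyadic level of step `j` of `dyadicChain`. -/
def chainLevel (N j : ℕ) : ℕ := if j < N then N - j else j + 1 - N

/-- For `j ≤ N` the least point `≥ u` of the form `m - c * 2 ^ j`, for `j ≥ N` the greatest point
`≤ v` of the form `m + c * 2 ^ (2 * N - j)`. -/
def dyadicChain (N u m v j : ℕ) : ℕ :=
  if j ≤ N then m - (m - u) / 2 ^ j * 2 ^ j else m + (v - m) / 2 ^ (2 * N - j) * 2 ^ (2 * N - j)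

section dyadicChain

variable {N u m v : ℕ}

lemma dyadicChain_zero (hum : u ≤ m) : dyadicChain N u m v 0 = u := by
  simp only [dyadicChain, zero_le, ↓reduceIte, pow_zero, Nat.div_one, mul_one]
  omega

lemma dyadicChain_two_mul (hN : 0 < N) (hmv : m ≤ v) : dyadicChain N u m v (2 * N) = v := by
  simp only [dyadicChain, show ¬2 * N ≤ N by omega, ↓reduceIte, tsub_self, pow_zero, Nat.div_one,
    mul_one]
  omega

lemma dyadicChain_of_le (hu : m - u < 2 ^ N) (hv : v - m < 2 ^ N) {j : ℕ} (hj : N ≤ j) :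
    dyadicChain N u m v j = m + (v - m) / 2 ^ (2 * N - j) * 2 ^ (2 * N - j) := by
  unfold dyadicChain
  split_ifs with h
  · obtain rfl : j = N := le_antisymm h hj
    rw [show 2 * j - j = j by omega, Nat.div_eq_of_lt hu, Nat.div_eq_of_lt hv]
    simp
  · rfl

lemma isAlignedStep_dyadicChain {i : ℕ} (hi : i < N) (hm : 2 ^ i ∣ m)
    (hu : m - u ≤ 2 ^ i) (hv : v - m ≤ 2 ^ i) (j : ℕ) :
    IsAlignedStep (2 ^ (N - chainLevel N j)) (dyadicChain N u m v j)
      (dyadicChain N u m v (j + 1)) := by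
  have hpow : 2 ^ i < 2 ^ N := Nat.pow_lt_pow_right (by norm_num) hi
  rcases lt_or_ge j N with hj | hj
  · have hlev : N - chainLevel N j = j := by simp only [chainLevel, if_pos hj]; omega
    simp only [dyadicChain, hlev, if_pos hj.le, if_pos (show j + 1 ≤ N by omega), pow_succ]
    exact isAlignedStep_sub_floor (Nat.sub_le m u) (lt_pow_or_pow_dvd hu hm j)
  have hu' : m - u < 2 ^ N := by omega
  have hv' : v - m < 2 ^ N := by omega
  rw [dyadicChain_of_le hu' hv' hj, dyadicChain_of_le hu' hv' (Nat.le_succ_of_le hj)]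
  rcases lt_or_ge j (2 * N) with hj2 | hj2
  · have hlev : N - chainLevel N j = 2 * N - (j + 1) := by
      simp only [chainLevel, if_neg (not_lt.2 hj)]; omega
    rw [hlev, show 2 * N - j = 2 * N - (j + 1) + 1 by omega, pow_succ]
    exact isAlignedStep_add_floor (lt_pow_or_pow_dvd hv hm _)
  · left
    rw [show 2 * N - j = 0 by omega, show 2 * N - (j + 1) = 0 by omega]

end dyadicChain

lemma exists_dyadic_chain {N u v : ℕ} (hN : 0 < N) (huv : u ≤ v) (hv : v ≤ 2 ^ N) :
    ∃ W : ℕ → ℕ, W 0 = u ∧ W (2 * N) = v ∧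
      ∀ j, IsAlignedStep (2 ^ (N - chainLevel N j)) (W j) (W (j + 1)) := by
  obtain ⟨i, hi, m, hum, hmv, hm, hu, hv⟩ :=
    exists_dyadic_midpoint (N - 1) huv (by rwa [Nat.sub_add_cancel hN])
  exact ⟨dyadicChain N u m v, dyadicChain_zero hum, dyadicChain_two_mul hN hmv,
    isAlignedStep_dyadicChain (by omega) hm hu hv⟩

lemma one_le_chainLevel (N j : ℕ) : 1 ≤ chainLevel N j := by
  unfold chainLevel; split_ifs <;> omega

lemma chainLevel_le {N j : ℕ} (hj : j < 2 * N) : chainLevel N j ≤ N := by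
  unfold chainLevel; split_ifs <;> omega

lemma sum_chainLevel {M : Type*} [AddCommMonoid M] (N : ℕ) (g : ℕ → M) :
    ∑ j ∈ range (2 * N), g (chainLevel N j) = 2 • ∑ n ∈ range N, g (n + 1) := by
  rw [two_mul, sum_range_add, two_nsmul]
  congr 1
  · rw [← sum_range_reflect]
    refine sum_congr rfl fun j hj => ?_
    rw [mem_range] at hj
    simp only [chainLevel, if_pos (show N - 1 - j < N by omega)]
    congr 1; omega
  · refine sum_congr rfl fun j _ => ?_
    simp only [chainLevel, if_neg (show ¬ N + j < N by omega)]
    congr 1; omega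

noncomputable def chainConst (r γ : ℝ) : ℝ :=
  2 * (2 * ∑' n : ℕ, ((n : ℝ) + 1) ^ (-(γ / (r - 1)))) ^ (r - 1)

lemma chainConst_nonneg (r γ : ℝ) : 0 ≤ chainConst r γ :=
  mul_nonneg zero_le_two (Real.rpow_nonneg (mul_nonneg zero_le_two
    (tsum_nonneg fun _ => Real.rpow_nonneg (by positivity) _)) _)

lemma rpow_sum_le_chainConst_mul {r γ : ℝ} (hr : 1 < r) (hγ : r - 1 < γ) {N : ℕ} (b S : ℕ → ℝ)
    (hb : ∀ j, 0 ≤ b j) (hbS : ∀ j < 2 * N, b j ^ r ≤ S (chainLevel N j)) :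
    (∑ j ∈ range (2 * N), b j) ^ r ≤
      chainConst r γ * ∑ n ∈ range N, ((n : ℝ) + 1) ^ γ * S (n + 1) := by
  set γ' := γ / (r - 1)
  have hγ' : 1 < γ' := (one_lt_div (by linarith)).2 hγ
  have hlev : ∀ j, (0 : ℝ) < chainLevel N j := fun j => by
    exact_mod_cast one_le_chainLevel N j
  have hweights : ∑ j ∈ range (2 * N), (chainLevel N j : ℝ) ^ (-γ') ≤
      2 * ∑' n : ℕ, ((n : ℝ) + 1) ^ (-γ') := by
    rw [sum_chainLevel N fun ℓ => (ℓ : ℝ) ^ (-γ'), nsmul_eq_mul, Nat.cast_ofNat]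
    push_cast
    gcongr
    exact (summable_nat_add_one_rpow_neg hγ').sum_le_tsum _
      fun n _ => Real.rpow_nonneg (by positivity) _
  have hmain : ∑ j ∈ range (2 * N), (chainLevel N j : ℝ) ^ γ * b j ^ r ≤
      2 * ∑ n ∈ range N, ((n : ℝ) + 1) ^ γ * S (n + 1) := by
    calc ∑ j ∈ range (2 * N), (chainLevel N j : ℝ) ^ γ * b j ^ r
        ≤ ∑ j ∈ range (2 * N), (chainLevel N j : ℝ) ^ γ * S (chainLevel N j) :=
          sum_le_sum fun j hj => mul_le_mul_of_nonneg_left (hbS j (mem_range.1 hj))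
            (Real.rpow_nonneg (hlev j).le _)
      _ = 2 * ∑ n ∈ range N, ((n : ℝ) + 1) ^ γ * S (n + 1) := by
          rw [sum_chainLevel N fun ℓ => (ℓ : ℝ) ^ γ * S ℓ, nsmul_eq_mul]
          push_cast
          rfl
  calc (∑ j ∈ range (2 * N), b j) ^ r
      ≤ (∑ j ∈ range (2 * N), (chainLevel N j : ℝ) ^ (-γ')) ^ (r - 1) *
          ∑ j ∈ range (2 * N), (chainLevel N j : ℝ) ^ γ * b j ^ r :=
        Real.rpow_sum_le_weighted_sum_rpow _ hr _ b hlev hb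
    _ ≤ (2 * ∑' n : ℕ, ((n : ℝ) + 1) ^ (-γ')) ^ (r - 1) *
          (2 * ∑ n ∈ range N, ((n : ℝ) + 1) ^ γ * S (n + 1)) := by
        refine mul_le_mul (Real.rpow_le_rpow ?_ hweights (by linarith)) hmain ?_ ?_
        · exact sum_nonneg fun j _ => Real.rpow_nonneg (hlev j).le _
        · exact sum_nonneg fun j _ =>
            mul_nonneg (Real.rpow_nonneg (hlev j).le _) (Real.rpow_nonneg (hb j) _)
        · exact Real.rpow_nonneg (mul_nonneg zero_le_two
            (tsum_nonneg fun _ => Real.rpow_nonneg (by positivity) _)) _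
    _ = _ := by rw [chainConst]; ring

/-- The sum of `F` over the dyadic intervals `[k T / 2 ^ ℓ, (k + 1) T / 2 ^ ℓ]` contained in
`[u T / 2 ^ N, v T / 2 ^ N]`. -/
noncomputable def dyadicSum (F : ℝ → ℝ → ℝ) (T : ℝ) (N u v ℓ : ℕ) : ℝ :=
  ∑ k ∈ (range (2 ^ ℓ)).filter (fun k => u ≤ k * 2 ^ (N - ℓ) ∧ (k + 1) * 2 ^ (N - ℓ) ≤ v),
    F (k * T / 2 ^ ℓ) ((k + 1) * T / 2 ^ ℓ)

lemma natCast_mul_pow_div (T : ℝ) (k : ℕ) {ℓ N : ℕ} (hℓ : ℓ ≤ N) :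
    ((k * 2 ^ (N - ℓ) : ℕ) : ℝ) * T / 2 ^ N = k * T / 2 ^ ℓ := by
  rw [show (2 : ℝ) ^ N = 2 ^ ℓ * 2 ^ (N - ℓ) by rw [← pow_add, Nat.add_sub_cancel' hℓ]]
  push_cast
  field_simp

section dyadicSum

variable {F : ℝ → ℝ → ℝ} {T : ℝ}

lemma dyadicSum_nonneg (hF : ∀ s t, 0 ≤ F s t) (N u v ℓ : ℕ) : 0 ≤ dyadicSum F T N u v ℓ :=
  sum_nonneg fun _ _ => hF _ _

lemma le_dyadicSum (hF : ∀ s t, 0 ≤ F s t) {N u v ℓ a : ℕ} (hℓ : ℓ ≤ N) (hv : v ≤ 2 ^ N)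
    (ha : 2 ^ (N - ℓ) ∣ a) (hua : u ≤ a) (hav : a + 2 ^ (N - ℓ) ≤ v) :
    F (a * T / 2 ^ N) ((a + 2 ^ (N - ℓ) : ℕ) * T / 2 ^ N) ≤ dyadicSum F T N u v ℓ := by
  obtain ⟨k, rfl⟩ : ∃ k, a = k * 2 ^ (N - ℓ) := ha.imp fun k hk => hk.trans (mul_comm _ _)
  have hpow : 2 ^ N = 2 ^ ℓ * 2 ^ (N - ℓ) := by rw [← pow_add, Nat.add_sub_cancel' hℓ]
  have hk : k ∈ (range (2 ^ ℓ)).filter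
      (fun k => u ≤ k * 2 ^ (N - ℓ) ∧ (k + 1) * 2 ^ (N - ℓ) ≤ v) := by
    rw [mem_filter, mem_range, ← Nat.mul_lt_mul_right (Nat.two_pow_pos (N - ℓ)), ← hpow]
    refine ⟨by linarith [Nat.two_pow_pos (N - ℓ)], hua, by linarith⟩
  have e1 := natCast_mul_pow_div T k hℓ
  have e2 := natCast_mul_pow_div T (k + 1) hℓ
  rw [e1, show k * 2 ^ (N - ℓ) + 2 ^ (N - ℓ) = (k + 1) * 2 ^ (N - ℓ) by ring, e2]
  push_cast
  exact single_le_sum (f := fun k : ℕ => F (k * T / 2 ^ ℓ) ((k + 1) * T / 2 ^ ℓ))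
    (fun _ _ => hF _ _) hk

lemma le_dyadicSum_of_isAlignedStep (hT : 0 ≤ T) (hF : ∀ s t, 0 ≤ F s t)
    (hF₀ : ∀ s, 0 ≤ s → s ≤ T → F s s = 0) {N u v ℓ a b : ℕ} (hℓ : ℓ ≤ N) (hv : v ≤ 2 ^ N)
    (hab : IsAlignedStep (2 ^ (N - ℓ)) a b) (hua : u ≤ a) (hbv : b ≤ v) :
    F (a * T / 2 ^ N) (b * T / 2 ^ N) ≤ dyadicSum F T N u v ℓ := by
  rcases hab with rfl | ⟨ha, rfl⟩
  · have ha : (a : ℝ) ≤ 2 ^ N := by exact_mod_cast hbv.trans hv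
    rw [hF₀ _ (by positivity) (by rw [div_le_iff₀ (by positivity)]; nlinarith)]
    exact dyadicSum_nonneg hF N u v ℓ
  · exact le_dyadicSum hF hℓ hv ha hua hbv

lemma sum_dyadicSum_le (hF : ∀ s t, 0 ≤ F s t) {m : ℕ} {K : Fin (m + 1) → ℕ} (hK : Monotone K)
    (N ℓ : ℕ) :
    ∑ i : Fin m, dyadicSum F T N (K i.castSucc) (K i.succ) ℓ ≤
      ∑ k ∈ range (2 ^ ℓ), F (k * T / 2 ^ ℓ) ((k + 1) * T / 2 ^ ℓ) := by
  simp only [dyadicSum, sum_filter]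
  rw [sum_comm]
  refine sum_le_sum fun k _ => ?_
  rw [← sum_filter, sum_const, nsmul_eq_mul]
  refine mul_le_of_le_one_left (hF _ _) ?_
  norm_cast
  refine card_le_one.2 fun i hi j hj => ?_
  simp only [mem_filter, mem_univ, true_and] at hi hj
  have hk : k * 2 ^ (N - ℓ) < (k + 1) * 2 ^ (N - ℓ) :=
    Nat.mul_lt_mul_of_pos_right (Nat.lt_succ_self k) (Nat.two_pow_pos _)
  by_contra hij
  rcases lt_or_gt_of_ne hij with h | h
  · have := hK (Fin.succ_le_castSucc_iff.2 h)
    omega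
  · have := hK (Fin.succ_le_castSucc_iff.2 h)
    omega

end dyadicSum

namespace ChenRelation

variable {T p γ : ℝ} {X : ℝ → EuclideanSpace ℝ (Fin 2)} {A : ℝ → ℝ → ℝ}

theorem abs_rpow_le_dyadic (chen : ChenRelation T X A) (hT : 0 ≤ T) (hp : 2 < p)
    (hγ : p - 1 < γ) {N u v : ℕ} (hN : 0 < N) (huv : u ≤ v) (hv : v ≤ 2 ^ N) :
    |A (u * T / 2 ^ N) (v * T / 2 ^ N)| ^ (p / 2) ≤
      2 ^ (p / 2 - 1) * chainConst (p / 2) γ * ∑ n ∈ range N, ((n : ℝ) + 1) ^ γ *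
          dyadicSum (fun s t => |A s t| ^ (p / 2)) T N u v (n + 1)
      + 2 ^ (p / 2 - 1) * (1 / 2) ^ (p / 2) * chainConst p γ * ∑ n ∈ range N, ((n : ℝ) + 1) ^ γ *
          dyadicSum (fun s t => ‖X t - X s‖ ^ p) T N u v (n + 1) := by
  obtain ⟨W, hW₀, hW₂, hstep⟩ := exists_dyadic_chain hN huv hv
  have hWmono : Monotone W := monotone_nat_of_le_succ fun j => (hstep j).le
  set w : ℕ → ℝ := fun j => W j * T / 2 ^ N
  have hw : Monotone w := fun i j hij => by
    have : (W i : ℝ) ≤ W j := by exact_mod_cast hWmono hij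
    simp only [w]; gcongr
  have hwT : w (2 * N) ≤ T := by
    have : (v : ℝ) ≤ 2 ^ N := by exact_mod_cast hv
    simp only [w, hW₂]
    rw [div_le_iff₀ (by positivity)]; nlinarith
  have hchain := chen.abs_le_sum_add_sq hw (by positivity) (2 * N) hwT
  simp only [w, hW₀, hW₂] at hchain
  have hF₁ : ∀ j < 2 * N, |A (w j) (w (j + 1))| ^ (p / 2) ≤
      dyadicSum (fun s t => |A s t| ^ (p / 2)) T N u v (chainLevel N j) := fun j hj =>
    le_dyadicSum_of_isAlignedStep (F := fun s t => |A s t| ^ (p / 2)) hT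
      (fun _ _ => Real.rpow_nonneg (abs_nonneg _) _)
      (fun s h0 hs => by simp [chen.apply_self h0 hs, Real.zero_rpow (by positivity : p / 2 ≠ 0)])
      (chainLevel_le hj) hv (hstep j) (hW₀ ▸ hWmono (Nat.zero_le j))
      (hW₂ ▸ hWmono (by omega))
  have hF₂ : ∀ j < 2 * N, ‖X (w (j + 1)) - X (w j)‖ ^ p ≤
      dyadicSum (fun s t => ‖X t - X s‖ ^ p) T N u v (chainLevel N j) := fun j hj =>
    le_dyadicSum_of_isAlignedStep (F := fun s t => ‖X t - X s‖ ^ p) hT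
      (fun _ _ => Real.rpow_nonneg (norm_nonneg _) _)
      (fun s _ _ => by simp [Real.zero_rpow (by positivity : p ≠ 0)])
      (chainLevel_le hj) hv (hstep j) (hW₀ ▸ hWmono (Nat.zero_le j))
      (hW₂ ▸ hWmono (by omega))
  have hA := rpow_sum_le_chainConst_mul (r := p / 2) (γ := γ) (by linarith) (by linarith)
    (fun j => |A (w j) (w (j + 1))|) _ (fun _ => abs_nonneg _) hF₁
  have hX := rpow_sum_le_chainConst_mul (r := p) (γ := γ) (by linarith) (by linarith)
    (fun j => ‖X (w (j + 1)) - X (w j)‖) _ (fun _ => norm_nonneg _) hF₂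
  refine (rpow_le_of_le_add_half_sq hp.le (abs_nonneg _) (sum_nonneg fun _ _ => abs_nonneg _)
    (sum_nonneg fun _ _ => norm_nonneg _) hchain).trans ?_
  rw [mul_assoc, mul_assoc, mul_assoc, ← mul_add]
  exact mul_le_mul_of_nonneg_left (add_le_add hA (mul_le_mul_of_nonneg_left hX (by positivity)))
    (by positivity)

end ChenRelation

lemma exists_dyadic_grid {m : ℕ} {T : ℝ} (hT : 0 < T) {t : Fin (m + 1) → ℝ} (ht : Monotone t)
    (hlast : t (Fin.last m) = T) (hdy : ∀ i, ∃ k n : ℕ, t i = k * T / 2 ^ n) :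
    ∃ N, 0 < N ∧ ∃ K : Fin (m + 1) → ℕ,
      Monotone K ∧ (∀ i, K i ≤ 2 ^ N) ∧ ∀ i, t i = K i * T / 2 ^ N := by
  choose k n hkn using hdy
  set N := univ.sup n + 1 with hN
  have hnN : ∀ i, n i ≤ N := fun i => (le_sup (mem_univ i)).trans (Nat.le_succ _)
  have htK : ∀ i, t i = ((k i * 2 ^ (N - n i) : ℕ) : ℝ) * T / 2 ^ N := fun i => by
    rw [hkn i, natCast_mul_pow_div T _ (hnN i)]
  have hscale : 0 < T / 2 ^ N := by positivity
  have hle : ∀ {a b : ℕ}, (a : ℝ) * T / 2 ^ N ≤ b * T / 2 ^ N → a ≤ b := fun h => by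
    rw [mul_div_assoc, mul_div_assoc] at h
    exact_mod_cast le_of_mul_le_mul_right h hscale
  refine ⟨N, by omega, fun i => k i * 2 ^ (N - n i), fun i j hij => ?_, fun i => ?_, htK⟩
  · exact hle (by rw [← htK, ← htK]; exact ht hij)
  · refine hle ?_
    rw [← htK, Nat.cast_pow, Nat.cast_ofNat, mul_div_cancel_left₀ _ (by positivity), ← hlast]
    exact ht (Fin.le_last i)

lemma sum_partition_le_tsum {F : ℝ → ℝ → ℝ} {T γ : ℝ} (hF : ∀ s t, 0 ≤ F s t) {m : ℕ}
    {K : Fin (m + 1) → ℕ} (hK : Monotone K) (N : ℕ)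
    (hsum : Summable fun n : ℕ => ((n : ℝ) + 1) ^ γ *
      ∑ k ∈ range (2 ^ (n + 1)), F (k * T / 2 ^ (n + 1)) ((k + 1) * T / 2 ^ (n + 1))) :
    ∑ i : Fin m, ∑ n ∈ range N,
        ((n : ℝ) + 1) ^ γ * dyadicSum F T N (K i.castSucc) (K i.succ) (n + 1)
      ≤ ∑' n : ℕ, ((n : ℝ) + 1) ^ γ *
          ∑ k ∈ range (2 ^ (n + 1)), F (k * T / 2 ^ (n + 1)) ((k + 1) * T / 2 ^ (n + 1)) := by
  rw [sum_comm]
  simp_rw [← mul_sum]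
  refine (sum_le_sum fun n _ => mul_le_mul_of_nonneg_left (sum_dyadicSum_le hF hK N (n + 1))
    (Real.rpow_nonneg (by positivity) _)).trans (hsum.sum_le_tsum _ fun n _ => ?_)
  exact mul_nonneg (Real.rpow_nonneg (by positivity) _) (sum_nonneg fun _ _ => hF _ _)

/-- deterministic core of the finite `(p/2)`-variation of the Lévy area.
For `p > 2` and `γ > p − 1` there are constants `C₁, C₂` depending only on `p` and `γ`
such that: whenever `X : [0,T] → ℝ²` and `A` satisfies the Chen relation, and the
weighted dyadic sums `K₁ = Σ_{n≥1} n^γ Σ_{k<2^n} |A(k2^{−n}T,(k+1)2^{−n}T)|^{p/2}`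
and `K₂ = Σ_{n≥1} n^γ Σ_{k<2^n} ‖X((k+1)2^{−n}T) − X(k2^{−n}T)‖^p` are finite, then
along every finite partition of `[0,T]` consisting of dyadic multiples of `T` one has
`Σ_i |A(t_{i−1}, t_i)|^{p/2} ≤ C₁K₁ + C₂K₂`. -/
theorem stmt_14 (p γ : ℝ) (hp : 2 < p) (hγ : p - 1 < γ) :
    ∃ C₁ C₂ : ℝ, ∀ (T : ℝ), 0 < T →
      ∀ (X : ℝ → EuclideanSpace ℝ (Fin 2)) (A : ℝ → ℝ → ℝ),
      (∀ s t u : ℝ, 0 ≤ s → s ≤ t → t ≤ u → u ≤ T →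
        A s u = A s t + A t u +
          (1 / 2) * ((X t 0 - X s 0) * (X u 1 - X t 1)
            - (X t 1 - X s 1) * (X u 0 - X t 0))) →
      Summable (fun n : ℕ => ((n : ℝ) + 1) ^ γ *
        ∑ k ∈ Finset.range (2 ^ (n + 1)),
          |A ((k : ℝ) * T / 2 ^ (n + 1)) (((k : ℝ) + 1) * T / 2 ^ (n + 1))| ^ (p / 2)) →
      Summable (fun n : ℕ => ((n : ℝ) + 1) ^ γ *
        ∑ k ∈ Finset.range (2 ^ (n + 1)),
          ‖X (((k : ℝ) + 1) * T / 2 ^ (n + 1)) - X ((k : ℝ) * T / 2 ^ (n + 1))‖ ^ p) →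
      ∀ (m : ℕ) (t : Fin (m + 1) → ℝ), Monotone t → t 0 = 0 → t (Fin.last m) = T →
      (∀ i, ∃ k n : ℕ, t i = (k : ℝ) * T / 2 ^ n) →
      ∑ i : Fin m, |A (t i.castSucc) (t i.succ)| ^ (p / 2) ≤
        C₁ * (∑' n : ℕ, ((n : ℝ) + 1) ^ γ *
          ∑ k ∈ Finset.range (2 ^ (n + 1)),
            |A ((k : ℝ) * T / 2 ^ (n + 1)) (((k : ℝ) + 1) * T / 2 ^ (n + 1))| ^ (p / 2))
        + C₂ * (∑' n : ℕ, ((n : ℝ) + 1) ^ γ *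
          ∑ k ∈ Finset.range (2 ^ (n + 1)),
            ‖X (((k : ℝ) + 1) * T / 2 ^ (n + 1)) - X ((k : ℝ) * T / 2 ^ (n + 1))‖ ^ p) := by
  refine ⟨2 ^ (p / 2 - 1) * chainConst (p / 2) γ,
    2 ^ (p / 2 - 1) * (1 / 2) ^ (p / 2) * chainConst p γ, ?_⟩
  intro T hT X A (chen : ChenRelation T X A) hK₁ hK₂ m t ht _ hlast hdy
  set C₁ := 2 ^ (p / 2 - 1) * chainConst (p / 2) γ
  set C₂ := 2 ^ (p / 2 - 1) * (1 / 2) ^ (p / 2) * chainConst p γ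
  have hC₁ : 0 ≤ C₁ := mul_nonneg (by positivity) (chainConst_nonneg _ _)
  have hC₂ : 0 ≤ C₂ := mul_nonneg (by positivity) (chainConst_nonneg _ _)
  obtain ⟨N, hN, K, hK, hKle, htK⟩ := exists_dyadic_grid hT ht hlast hdy
  set SA : Fin m → ℝ := fun i => ∑ n ∈ range N, ((n : ℝ) + 1) ^ γ *
    dyadicSum (fun s t => |A s t| ^ (p / 2)) T N (K i.castSucc) (K i.succ) (n + 1)
  set SX : Fin m → ℝ := fun i => ∑ n ∈ range N, ((n : ℝ) + 1) ^ γ *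
    dyadicSum (fun s t => ‖X t - X s‖ ^ p) T N (K i.castSucc) (K i.succ) (n + 1)
  calc ∑ i : Fin m, |A (t i.castSucc) (t i.succ)| ^ (p / 2)
      ≤ ∑ i : Fin m, (C₁ * SA i + C₂ * SX i) := sum_le_sum fun i _ => by
        rw [htK, htK]
        exact chen.abs_rpow_le_dyadic hT.le hp hγ hN (hK i.castSucc_le_succ) (hKle _)
    _ = C₁ * ∑ i, SA i + C₂ * ∑ i, SX i := by rw [sum_add_distrib, ← mul_sum, ← mul_sum]
    _ ≤ _ := add_le_add
        (mul_le_mul_of_nonneg_left (sum_partition_le_tsum (fun _ _ => by positivity) hK N hK₁) hC₁)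
        (mul_le_mul_of_nonneg_left (sum_partition_le_tsum (fun _ _ => by positivity) hK N hK₂) hC₂)
end
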